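/- arXiv:2306.07262 — 6 statements merged into one kernel-verified Lean document; each statement's English description precedes it below -/
import Mathlib

section
/- For a symmetric order-3 tensor S on R^d, the Frobenius norm satisfies ‖S‖_F ≤ d‖S‖, where ‖S‖_F^2 = Σ_{i,j,k} S_{ijk}^2 and ‖S‖ is the operator norm. -/
open scoped BigOperators

/-- Operator norm of a symmetric order-3 tensor on `ℝ^d`:
`sup_{‖u‖ = 1} ⟨S, u ⊗ u ⊗ u⟩`. -/
noncomputable def tensorOpNorm {d : ℕ} (S : Fin d → Fin d → Fin d → ℝ) : ℝ :=
  ⨆ u : {u : Fin d → ℝ // ∑ i, (u i) ^ 2 = 1},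
    ∑ i, ∑ j, ∑ k, S i j k * u.1 i * u.1 j * u.1 k

namespace FrobAux

variable {d : ℕ}

/-- trilinear form associated to the tensor -/
def F (S : Fin d → Fin d → Fin d → ℝ) (x y z : Fin d → ℝ) : ℝ :=
  ∑ i, ∑ j, ∑ k, S i j k * x i * y j * z k

/-- dot product -/
def dot (x y : Fin d → ℝ) : ℝ := ∑ i, x i * y i

/-- the unit sphere -/
def sph (d : ℕ) : Set (Fin d → ℝ) := {u | ∑ i, u i ^ 2 = 1}

lemma dot_self (u : Fin d → ℝ) : dot u u = ∑ i, u i ^ 2 := by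
  unfold dot
  exact Finset.sum_congr rfl fun i _ => by ring

lemma dot_neg_left (x y : Fin d → ℝ) : dot (fun i => -x i) y = - dot x y := by
  unfold dot
  rw [← Finset.sum_neg_distrib]
  exact Finset.sum_congr rfl fun i _ => by ring

lemma dot_comm (x y : Fin d → ℝ) : dot x y = dot y x := by
  unfold dot
  exact Finset.sum_congr rfl fun i _ => by ring

lemma sph_neg {u : Fin d → ℝ} (hu : u ∈ sph d) : (fun i => -u i) ∈ sph d := by
  simpa [sph] using hu

variable {S : Fin d → Fin d → Fin d → ℝ}

lemma F_eq_dot1 (x y z : Fin d → ℝ) :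
    F S x y z = dot x (fun i => ∑ j, ∑ k, S i j k * y j * z k) := by
  unfold F dot
  refine Finset.sum_congr rfl fun i _ => ?_
  rw [Finset.mul_sum]
  refine Finset.sum_congr rfl fun j _ => ?_
  rw [Finset.mul_sum]
  exact Finset.sum_congr rfl fun k _ => by ring

lemma F_eq_dot2 (x y z : Fin d → ℝ) :
    F S x y z = dot y (fun j => ∑ i, ∑ k, S i j k * x i * z k) := by
  unfold F dot
  rw [Finset.sum_comm]
  refine Finset.sum_congr rfl fun j _ => ?_
  rw [Finset.mul_sum]
  refine Finset.sum_congr rfl fun i _ => ?_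
  rw [Finset.mul_sum]
  exact Finset.sum_congr rfl fun k _ => by ring

lemma F_eq_dot3 (x y z : Fin d → ℝ) :
    F S x y z = dot z (fun k => ∑ i, ∑ j, S i j k * x i * y j) := by
  unfold F dot
  have h1 : ∀ i : Fin d, ∑ j, ∑ k, S i j k * x i * y j * z k
      = ∑ k, ∑ j, S i j k * x i * y j * z k := fun i => Finset.sum_comm
  simp_rw [h1]
  rw [Finset.sum_comm]
  refine Finset.sum_congr rfl fun k _ => ?_
  rw [Finset.mul_sum]
  refine Finset.sum_congr rfl fun i _ => ?_
  rw [Finset.mul_sum]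
  exact Finset.sum_congr rfl fun j _ => by ring

lemma F_neg1 (x y z : Fin d → ℝ) : F S (fun i => -x i) y z = - F S x y z := by
  rw [F_eq_dot1, F_eq_dot1, dot_neg_left]

lemma F_neg2 (x y z : Fin d → ℝ) : F S x (fun i => -y i) z = - F S x y z := by
  rw [F_eq_dot2, F_eq_dot2 (S := S) x y z, dot_neg_left]

lemma F_neg3 (x y z : Fin d → ℝ) : F S x y (fun i => -z i) = - F S x y z := by
  rw [F_eq_dot3, F_eq_dot3 (S := S) x y z, dot_neg_left]

lemma F_add2 (x y y' z : Fin d → ℝ) :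
    F S x (fun i => y i + y' i) z = F S x y z + F S x y' z := by
  unfold F
  rw [← Finset.sum_add_distrib]
  refine Finset.sum_congr rfl fun i _ => ?_
  rw [← Finset.sum_add_distrib]
  refine Finset.sum_congr rfl fun j _ => ?_
  rw [← Finset.sum_add_distrib]
  exact Finset.sum_congr rfl fun k _ => by ring

lemma F_add3 (x y z z' : Fin d → ℝ) :
    F S x y (fun i => z i + z' i) = F S x y z + F S x y z' := by
  unfold F
  rw [← Finset.sum_add_distrib]
  refine Finset.sum_congr rfl fun i _ => ?_
  rw [← Finset.sum_add_distrib]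
  refine Finset.sum_congr rfl fun j _ => ?_
  rw [← Finset.sum_add_distrib]
  exact Finset.sum_congr rfl fun k _ => by ring

lemma F_smul2 (c : ℝ) (x y z : Fin d → ℝ) :
    F S x (fun i => c * y i) z = c * F S x y z := by
  unfold F
  rw [Finset.mul_sum]
  refine Finset.sum_congr rfl fun i _ => ?_
  rw [Finset.mul_sum]
  refine Finset.sum_congr rfl fun j _ => ?_
  rw [Finset.mul_sum]
  exact Finset.sum_congr rfl fun k _ => by ring

lemma F_smul3 (c : ℝ) (x y z : Fin d → ℝ) :
    F S x y (fun i => c * z i) = c * F S x y z := by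
  unfold F
  rw [Finset.mul_sum]
  refine Finset.sum_congr rfl fun i _ => ?_
  rw [Finset.mul_sum]
  refine Finset.sum_congr rfl fun j _ => ?_
  rw [Finset.mul_sum]
  exact Finset.sum_congr rfl fun k _ => by ring

/-- symmetry in first two slots -/
lemma F_swap12 (hS : ∀ i j k, S i j k = S j i k ∧ S i j k = S i k j)
    (x y z : Fin d → ℝ) : F S x y z = F S y x z := by
  unfold F
  rw [Finset.sum_comm]
  refine Finset.sum_congr rfl fun j _ => ?_
  refine Finset.sum_congr rfl fun i _ => ?_
  refine Finset.sum_congr rfl fun k _ => ?_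
  rw [(hS i j k).1]; ring

/-- symmetry in last two slots -/
lemma F_swap23 (hS : ∀ i j k, S i j k = S j i k ∧ S i j k = S i k j)
    (x y z : Fin d → ℝ) : F S x y z = F S x z y := by
  unfold F
  refine Finset.sum_congr rfl fun i _ => ?_
  rw [Finset.sum_comm]
  refine Finset.sum_congr rfl fun k _ => ?_
  refine Finset.sum_congr rfl fun j _ => ?_
  rw [(hS i j k).2]; ring

lemma isClosed_sph : IsClosed (sph d) := by
  have : sph d = {u : Fin d → ℝ | ∑ i, u i ^ 2 = 1} := rfl
  rw [this]
  exact isClosed_eq (by fun_prop) continuous_const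

lemma isCompact_sph : IsCompact (sph d) := by
  refine IsCompact.of_isClosed_subset (isCompact_univ_pi fun _ : Fin d => isCompact_Icc
    (a := (-1:ℝ)) (b := 1)) isClosed_sph ?_
  intro u hu i _
  have h1 : u i ^ 2 ≤ 1 := by
    have h2 := Finset.single_le_sum (f := fun i => u i ^ 2)
      (fun i _ => sq_nonneg _) (Finset.mem_univ i)
    rw [hu] at h2
    exact h2
  constructor <;> nlinarith

lemma continuous_F : Continuous
    (fun p : (Fin d → ℝ) × (Fin d → ℝ) × (Fin d → ℝ) => F S p.1 p.2.1 p.2.2) := by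
  unfold F
  fun_prop

lemma continuous_f : Continuous
    (fun p : (Fin d → ℝ) × (Fin d → ℝ) × (Fin d → ℝ) =>
      dot p.1 p.2.1 + dot p.2.1 p.2.2 + dot p.1 p.2.2) := by
  unfold dot
  fun_prop

/-- the standard basis vector -/
def bas (d : ℕ) (j : Fin d) : Fin d → ℝ := fun t => if t = j then 1 else 0

lemma bas_mem_sph (j : Fin d) : bas d j ∈ sph d := by
  simp [sph, bas, Finset.sum_ite_eq']

lemma F_bas (j k : Fin d) (x : Fin d → ℝ) :
    F S x (bas d j) (bas d k) = ∑ i, S i j k * x i := by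
  unfold F bas
  refine Finset.sum_congr rfl fun i _ => ?_
  simp [mul_ite, ite_mul, Finset.sum_ite_eq']

/-- Support/first-order condition: if a linear functional is bounded by `L` on the sphere and
attains `L` at `y`, then its representing vector is `L • y`. -/
lemma support_eq {L : ℝ} (hL : 0 < L) {g y : Fin d → ℝ} (hy : y ∈ sph d)
    (hub : ∀ u ∈ sph d, dot u g ≤ L) (heq : dot y g = L) : ∀ i, g i = L * y i := by
  have hg2 : ∑ i, g i ^ 2 ≤ L ^ 2 := by
    by_cases h0 : ∑ i, g i ^ 2 = 0
    · rw [h0]; positivity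
    · have hpos : 0 < ∑ i, g i ^ 2 := by
        rcases lt_or_eq_of_le (Finset.sum_nonneg fun i _ => sq_nonneg (g i)) with h | h
        · exact h
        · exact absurd h.symm h0
      set n := Real.sqrt (∑ i, g i ^ 2) with hn
      have hnpos : 0 < n := Real.sqrt_pos.mpr hpos
      have hnsq : n ^ 2 = ∑ i, g i ^ 2 := Real.sq_sqrt hpos.le
      have hmem : (fun i => g i / n) ∈ sph d := by
        have : ∑ i, (g i / n) ^ 2 = (∑ i, g i ^ 2) / n ^ 2 := by
          rw [Finset.sum_div]
          exact Finset.sum_congr rfl fun i _ => by ring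
        simp only [sph, Set.mem_setOf_eq, this, hnsq]
        field_simp
      have hdot : dot (fun i => g i / n) g = n := by
        unfold dot
        have : ∑ i, g i / n * g i = (∑ i, g i ^ 2) / n := by
          rw [Finset.sum_div]
          exact Finset.sum_congr rfl fun i _ => by ring
        rw [this, ← hnsq]
        field_simp
      have hnL : n ≤ L := by
        have := hub _ hmem
        rwa [hdot] at this
      calc ∑ i, g i ^ 2 = n ^ 2 := hnsq.symm
        _ ≤ L ^ 2 := by nlinarith
  have hsum : ∑ i, (g i - L * y i) ^ 2 ≤ 0 := by
    have hexp : ∀ i : Fin d, (g i - L * y i) ^ 2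
        = g i ^ 2 - 2 * L * (y i * g i) + L ^ 2 * y i ^ 2 := fun i => by ring
    simp_rw [hexp]
    rw [Finset.sum_add_distrib, Finset.sum_sub_distrib, ← Finset.mul_sum, ← Finset.mul_sum]
    have hy1 : ∑ i, y i ^ 2 = 1 := hy
    have heq' : ∑ i, y i * g i = L := heq
    rw [hy1, heq']
    nlinarith
  intro i
  have hall : ∀ i ∈ Finset.univ, (g i - L * y i) ^ 2 = 0 := by
    rw [← Finset.sum_eq_zero_iff_of_nonneg (fun i _ => sq_nonneg _)]
    exact le_antisymm hsum (Finset.sum_nonneg fun i _ => sq_nonneg _)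
  have := hall i (Finset.mem_univ i)
  have := pow_eq_zero_iff (n := 2) (by norm_num) |>.mp this
  linarith [this]

/-- The key scalar inequality for the merging argument. -/
lemma arith {b q s : ℝ} (hb2 : b < 1) (hq : -b ≤ q) (hs : s ^ 2 = 2 + 2 * b)
    (hspos : 0 < s) : q + b < 1 + 2 * q / s := by
  have hs2 : s ≤ 2 := by nlinarith
  have hsb : 2 * b < s := by
    rcases le_or_gt b 0 with hb | hb
    · nlinarith
    · nlinarith
  have key : 0 ≤ (q + b) * (2 - s) := mul_nonneg (by linarith) (by linarith)
  have hmain : (q + b) * s < s + 2 * q := by nlinarith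
  have hgoal : q + b < (s + 2 * q) / s := by
    rw [lt_div_iff₀ hspos]; linarith
  have hrw : (s + 2 * q) / s = 1 + 2 * q / s := by field_simp
  linarith [hrw ▸ hgoal]

lemma dot_neg_right (x y : Fin d → ℝ) : dot x (fun i => -y i) = - dot x y := by
  rw [dot_comm, dot_neg_left, dot_comm]

lemma dot_neg_neg (x y : Fin d → ℝ) : dot (fun i => -x i) (fun i => -y i) = dot x y := by
  rw [dot_neg_left, dot_neg_right, neg_neg]

lemma sum_add_sq (y z : Fin d → ℝ) :
    ∑ i, (y i + z i) ^ 2 = (∑ i, y i ^ 2) + 2 * dot y z + ∑ i, z i ^ 2 := by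
  have hexp : ∀ i : Fin d, (y i + z i) ^ 2
      = y i ^ 2 + 2 * (y i * z i) + z i ^ 2 := fun i => by ring
  simp_rw [hexp]
  rw [Finset.sum_add_distrib, Finset.sum_add_distrib, ← Finset.mul_sum]
  rfl

lemma sum_sub_sq (y z : Fin d → ℝ) :
    ∑ i, (y i - z i) ^ 2 = (∑ i, y i ^ 2) - 2 * dot y z + ∑ i, z i ^ 2 := by
  have hexp : ∀ i : Fin d, (y i - z i) ^ 2
      = y i ^ 2 - 2 * (y i * z i) + z i ^ 2 := fun i => by ring
  simp_rw [hexp]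
  rw [Finset.sum_add_distrib, Finset.sum_sub_distrib, ← Finset.mul_sum]
  rfl

variable {S : Fin d → Fin d → Fin d → ℝ} in
lemma F_add1 (x x' y z : Fin d → ℝ) :
    F S (fun i => x i + x' i) y z = F S x y z + F S x' y z := by
  unfold F
  rw [← Finset.sum_add_distrib]
  refine Finset.sum_congr rfl fun i _ => ?_
  rw [← Finset.sum_add_distrib]
  refine Finset.sum_congr rfl fun j _ => ?_
  rw [← Finset.sum_add_distrib]
  exact Finset.sum_congr rfl fun k _ => by ring

variable {S : Fin d → Fin d → Fin d → ℝ} in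
lemma F_smul1 (c : ℝ) (x y z : Fin d → ℝ) :
    F S (fun i => c * x i) y z = c * F S x y z := by
  unfold F
  rw [Finset.mul_sum]
  refine Finset.sum_congr rfl fun i _ => ?_
  rw [Finset.mul_sum]
  refine Finset.sum_congr rfl fun j _ => ?_
  rw [Finset.mul_sum]
  exact Finset.sum_congr rfl fun k _ => by ring

set_option maxHeartbeats 2000000 in
theorem banach (hd : 0 < d) {S : Fin d → Fin d → Fin d → ℝ}
    (hS : ∀ i j k, S i j k = S j i k ∧ S i j k = S i k j) :
    ∃ w ∈ sph d, ∀ x ∈ sph d, ∀ y ∈ sph d, ∀ z ∈ sph d, F S x y z ≤ F S w w w := by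
  classical
  set T : Set ((Fin d → ℝ) × (Fin d → ℝ) × (Fin d → ℝ)) :=
    (sph d) ×ˢ ((sph d) ×ˢ (sph d)) with hTdef
  have hmemT : ∀ {x y z : Fin d → ℝ}, x ∈ sph d → y ∈ sph d → z ∈ sph d →
      (x, y, z) ∈ T := by
    intro x y z hx hy hz
    exact Set.mem_prod.mpr ⟨hx, Set.mem_prod.mpr ⟨hy, hz⟩⟩
  have hTc : IsCompact T := isCompact_sph.prod (isCompact_sph.prod isCompact_sph)
  have hTne : T.Nonempty :=
    ⟨(bas d ⟨0, hd⟩, bas d ⟨0, hd⟩, bas d ⟨0, hd⟩),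
      hmemT (bas_mem_sph _) (bas_mem_sph _) (bas_mem_sph _)⟩
  obtain ⟨p₀, hp₀T, hp₀⟩ := hTc.exists_isMaxOn hTne (continuous_F (S := S)).continuousOn
  set L := F S p₀.1 p₀.2.1 p₀.2.2 with hLdef
  have hmaxT : ∀ x ∈ sph d, ∀ y ∈ sph d, ∀ z ∈ sph d, F S x y z ≤ L :=
    fun x hx y hy z hz => hp₀ (hmemT hx hy hz)
  rcases le_or_gt L 0 with hL0 | hLpos
  · -- degenerate case: the form is ≤ 0 everywhere, hence ≡ 0 on the sphere
    refine ⟨bas d ⟨0, hd⟩, bas_mem_sph _, fun x hx y hy z hz => ?_⟩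
    have h1 : F S x y z ≤ L := hmaxT x hx y hy z hz
    have h2 : F S (fun i => -(bas d ⟨0, hd⟩) i) (bas d ⟨0, hd⟩) (bas d ⟨0, hd⟩) ≤ L :=
      hmaxT _ (sph_neg (bas_mem_sph _)) _ (bas_mem_sph _) _ (bas_mem_sph _)
    rw [F_neg1] at h2
    linarith
  · -- main case
    set K : Set ((Fin d → ℝ) × (Fin d → ℝ) × (Fin d → ℝ)) :=
      T ∩ {p | F S p.1 p.2.1 p.2.2 = L} with hKdef
    have hKc : IsCompact K :=
      hTc.inter_right (isClosed_eq (continuous_F (S := S)) continuous_const)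
    have hKne : K.Nonempty := ⟨p₀, hp₀T, rfl⟩
    obtain ⟨p, hpK, hpmax⟩ := hKc.exists_isMaxOn hKne (continuous_f (d := d)).continuousOn
    obtain ⟨x, y, z⟩ := p
    obtain ⟨hpT, hFp⟩ := hpK
    have hx : x ∈ sph d := (Set.mem_prod.mp hpT).1
    have hy : y ∈ sph d := (Set.mem_prod.mp (Set.mem_prod.mp hpT).2).1
    have hz : z ∈ sph d := (Set.mem_prod.mp (Set.mem_prod.mp hpT).2).2
    have hFp' : F S x y z = L := hFp
    have hy' : ∑ i, y i ^ 2 = 1 := hy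
    have hz' : ∑ i, z i ^ 2 = 1 := hz
    have hx' : ∑ i, x i ^ 2 = 1 := hx
    set a := dot x y with hadef
    set b := dot y z with hbdef
    set c := dot x z with hcdef
    have hfmax : ∀ q ∈ K, dot q.1 q.2.1 + dot q.2.1 q.2.2 + dot q.1 q.2.2 ≤ a + b + c :=
      fun q hq => hpmax hq
    -- the maximum of f on K is nonnegative
    have hf0 : 0 ≤ a + b + c := by
      have hm1 : ((fun i => -x i), (fun i => -y i), z) ∈ K := by
        refine ⟨hmemT (sph_neg hx) (sph_neg hy) hz, ?_⟩
        show F S _ _ _ = L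
        rw [F_neg1, F_neg2, neg_neg, hFp']
      have hm2 : ((fun i => -x i), y, (fun i => -z i)) ∈ K := by
        refine ⟨hmemT (sph_neg hx) hy (sph_neg hz), ?_⟩
        show F S _ _ _ = L
        rw [F_neg1, F_neg3, neg_neg, hFp']
      have hm3 : (x, (fun i => -y i), (fun i => -z i)) ∈ K := by
        refine ⟨hmemT hx (sph_neg hy) (sph_neg hz), ?_⟩
        show F S _ _ _ = L
        rw [F_neg2, F_neg3, neg_neg, hFp']
      have h1 := hfmax _ hm1
      have h2 := hfmax _ hm2
      have h3 := hfmax _ hm3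
      simp only [dot_neg_neg, dot_neg_left, dot_neg_right] at h1 h2 h3
      linarith
    -- first order conditions
    have c1 : ∀ i, (∑ j, ∑ k, S i j k * y j * z k) = L * x i := by
      refine support_eq hLpos hx (fun u hu => ?_) ?_
      · rw [← F_eq_dot1]; exact hmaxT u hu y hy z hz
      · rw [← F_eq_dot1]; exact hFp'
    have c2 : ∀ j, (∑ i, ∑ k, S i j k * x i * z k) = L * y j := by
      refine support_eq hLpos hy (fun u hu => ?_) ?_
      · rw [← F_eq_dot2]; exact hmaxT x hx u hu z hz
      · rw [← F_eq_dot2]; exact hFp'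
    have c3 : ∀ k, (∑ i, ∑ j, S i j k * x i * y j) = L * z k := by
      refine support_eq hLpos hz (fun u hu => ?_) ?_
      · rw [← F_eq_dot3]; exact hmaxT x hx y hy u hu
      · rw [← F_eq_dot3]; exact hFp'
    -- evaluation formulas
    have hFw1 : ∀ w : Fin d → ℝ, F S w y z = L * dot w x := by
      intro w
      rw [F_eq_dot1]
      unfold dot
      rw [Finset.mul_sum]
      refine Finset.sum_congr rfl fun i _ => ?_
      show w i * (∑ j, ∑ k, S i j k * y j * z k) = L * (w i * x i)
      rw [c1 i]; ring
    have hFw2 : ∀ w : Fin d → ℝ, F S x w z = L * dot w y := by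
      intro w
      rw [F_eq_dot2]
      unfold dot
      rw [Finset.mul_sum]
      refine Finset.sum_congr rfl fun j _ => ?_
      show w j * (∑ i, ∑ k, S i j k * x i * z k) = L * (w j * y j)
      rw [c2 j]; ring
    have hFw3 : ∀ w : Fin d → ℝ, F S x y w = L * dot w z := by
      intro w
      rw [F_eq_dot3]
      unfold dot
      rw [Finset.mul_sum]
      refine Finset.sum_congr rfl fun k _ => ?_
      show w k * (∑ i, ∑ j, S i j k * x i * y j) = L * (w k * z k)
      rw [c3 k]; ring
    -- merging the last two slots : y = z
    have hyz : y = z := by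
      by_contra hne
      have hb1 : b < 1 := by
        by_contra hble
        push_neg at hble
        have hsum : ∑ i, (y i - z i) ^ 2 = 2 - 2 * b := by
          rw [sum_sub_sq, hy', hz', ← hbdef]; ring
        have hle : ∑ i, (y i - z i) ^ 2 ≤ 0 := by rw [hsum]; linarith
        have hzero : ∀ i ∈ Finset.univ, (y i - z i) ^ 2 = 0 := by
          rw [← Finset.sum_eq_zero_iff_of_nonneg (fun i _ => sq_nonneg _)]
          exact le_antisymm hle (Finset.sum_nonneg fun i _ => sq_nonneg _)
        exact hne (funext fun i => by
          have h := hzero i (Finset.mem_univ i)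
          have := pow_eq_zero_iff (n := 2) (by norm_num) |>.mp h
          linarith)
      have hb2 : -1 < b := by
        by_contra hble
        push_neg at hble
        have hsum : ∑ i, (y i + z i) ^ 2 = 2 + 2 * b := by
          rw [sum_add_sq, hy', hz', ← hbdef]; ring
        have hle : ∑ i, (y i + z i) ^ 2 ≤ 0 := by rw [hsum]; linarith
        have hzero : ∀ i ∈ Finset.univ, (y i + z i) ^ 2 = 0 := by
          rw [← Finset.sum_eq_zero_iff_of_nonneg (fun i _ => sq_nonneg _)]
          exact le_antisymm hle (Finset.sum_nonneg fun i _ => sq_nonneg _)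
        have hyz' : ∀ i, y i = -z i := fun i => by
          have h := hzero i (Finset.mem_univ i)
          have := pow_eq_zero_iff (n := 2) (by norm_num) |>.mp h
          linarith
        have hac : a = -c := by
          rw [hadef, hcdef]
          have : y = fun i => -z i := funext hyz'
          rw [this, dot_neg_right]
        linarith
      set s := Real.sqrt (2 + 2 * b) with hsdef
      have hspos : 0 < s := Real.sqrt_pos.mpr (by linarith)
      have hs : s ^ 2 = 2 + 2 * b := Real.sq_sqrt (by linarith)
      have hs0 : s ≠ 0 := ne_of_gt hspos
      set v : Fin d → ℝ := fun i => s⁻¹ * (y i + z i) with hvdef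
      have hvs : v ∈ sph d := by
        show ∑ i, (s⁻¹ * (y i + z i)) ^ 2 = 1
        have he : ∑ i, (s⁻¹ * (y i + z i)) ^ 2 = s⁻¹ ^ 2 * ∑ i, (y i + z i) ^ 2 := by
          rw [Finset.mul_sum]
          exact Finset.sum_congr rfl fun i _ => by ring
        rw [he, sum_add_sq, hy', hz', ← hbdef]
        have : (1 : ℝ) + 2 * b + 1 = s ^ 2 := by rw [hs]; ring
        rw [this]
        field_simp
      have hFv : F S x v v = L := by
        have e1 : F S x v v = s⁻¹ * (s⁻¹ * (F S x y y + F S x z y + (F S x y z + F S x z z))) := by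
          show F S x (fun i => s⁻¹ * (y i + z i)) (fun i => s⁻¹ * (y i + z i)) = _
          rw [F_smul2, F_smul3, F_add2, F_add3, F_add3]
          ring
        have v1 : F S x y y = L * b := by rw [hFw3 y, ← hbdef]
        have v2 : F S x y z = L := by rw [hFw3 z, dot_self, hz']; ring
        have v3 : F S x z y = L := by rw [F_swap23 hS, hFw3 z, dot_self, hz']; ring
        have v4 : F S x z z = L * b := by rw [hFw2 z, dot_comm, ← hbdef]
        rw [e1, v1, v2, v3, v4]
        have : L * b + L + (L + L * b) = L * s ^ 2 := by rw [hs]; ring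
        rw [this, pow_two]
        field_simp
      have hKv : (x, v, v) ∈ K := ⟨hmemT hx hvs hvs, hFv⟩
      have hfv := hfmax _ hKv
      have hdxv : dot x v = s⁻¹ * (a + c) := by
        show (∑ i, x i * (s⁻¹ * (y i + z i))) = _
        rw [hadef, hcdef]
        unfold dot
        rw [mul_add, Finset.mul_sum, Finset.mul_sum, ← Finset.sum_add_distrib]
        exact Finset.sum_congr rfl fun i _ => by ring
      have hdvv : dot v v = 1 := by rw [dot_self]; exact hvs
      simp only [hdxv, hdvv] at hfv
      have harith := arith hb1 (show -b ≤ a + c by linarith) hs hspos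
      have hdiv : 2 * (a + c) / s = s⁻¹ * (a + c) + s⁻¹ * (a + c) := by
        field_simp; ring
      rw [hdiv] at harith
      linarith
    -- merging the first two slots : x = y
    have hxy : x = y := by
      by_contra hne
      have ha1 : a < 1 := by
        by_contra hble
        push_neg at hble
        have hsum : ∑ i, (x i - y i) ^ 2 = 2 - 2 * a := by
          rw [sum_sub_sq, hx', hy', ← hadef]; ring
        have hle : ∑ i, (x i - y i) ^ 2 ≤ 0 := by rw [hsum]; linarith
        have hzero : ∀ i ∈ Finset.univ, (x i - y i) ^ 2 = 0 := by
          rw [← Finset.sum_eq_zero_iff_of_nonneg (fun i _ => sq_nonneg _)]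
          exact le_antisymm hle (Finset.sum_nonneg fun i _ => sq_nonneg _)
        exact hne (funext fun i => by
          have h := hzero i (Finset.mem_univ i)
          have := pow_eq_zero_iff (n := 2) (by norm_num) |>.mp h
          linarith)
      have ha2 : -1 < a := by
        by_contra hble
        push_neg at hble
        have hsum : ∑ i, (x i + y i) ^ 2 = 2 + 2 * a := by
          rw [sum_add_sq, hx', hy', ← hadef]; ring
        have hle : ∑ i, (x i + y i) ^ 2 ≤ 0 := by rw [hsum]; linarith
        have hzero : ∀ i ∈ Finset.univ, (x i + y i) ^ 2 = 0 := by
          rw [← Finset.sum_eq_zero_iff_of_nonneg (fun i _ => sq_nonneg _)]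
          exact le_antisymm hle (Finset.sum_nonneg fun i _ => sq_nonneg _)
        have hxy' : ∀ i, y i = -x i := fun i => by
          have h := hzero i (Finset.mem_univ i)
          have := pow_eq_zero_iff (n := 2) (by norm_num) |>.mp h
          linarith
        have hbc' : b = -c := by
          rw [hbdef, hcdef]
          have : y = fun i => -x i := funext hxy'
          rw [this, dot_neg_left]
        linarith
      set s := Real.sqrt (2 + 2 * a) with hsdef
      have hspos : 0 < s := Real.sqrt_pos.mpr (by linarith)
      have hs : s ^ 2 = 2 + 2 * a := Real.sq_sqrt (by linarith)
      have hs0 : s ≠ 0 := ne_of_gt hspos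
      set u : Fin d → ℝ := fun i => s⁻¹ * (x i + y i) with hudef
      have hus : u ∈ sph d := by
        show ∑ i, (s⁻¹ * (x i + y i)) ^ 2 = 1
        have he : ∑ i, (s⁻¹ * (x i + y i)) ^ 2 = s⁻¹ ^ 2 * ∑ i, (x i + y i) ^ 2 := by
          rw [Finset.mul_sum]
          exact Finset.sum_congr rfl fun i _ => by ring
        rw [he, sum_add_sq, hx', hy', ← hadef]
        have : (1 : ℝ) + 2 * a + 1 = s ^ 2 := by rw [hs]; ring
        rw [this]
        field_simp
      have hFu : F S u u z = L := by
        have e1 : F S u u z = s⁻¹ * (s⁻¹ * (F S x x z + F S y x z + (F S x y z + F S y y z))) := by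
          show F S (fun i => s⁻¹ * (x i + y i)) (fun i => s⁻¹ * (x i + y i)) z = _
          rw [F_smul1, F_smul2, F_add1, F_add2, F_add2]
          ring
        have v1 : F S x x z = L * a := by rw [hFw2 x, ← hadef]
        have v2 : F S x y z = L := hFp'
        have v3 : F S y x z = L := by rw [← F_swap12 hS, hFp']
        have v4 : F S y y z = L * a := by rw [hFw1 y, dot_comm, ← hadef]
        rw [e1, v1, v2, v3, v4]
        have : L * a + L + (L + L * a) = L * s ^ 2 := by rw [hs]; ring
        rw [this, pow_two]
        field_simp
      have hKu : (u, u, z) ∈ K := ⟨hmemT hus hus hz, hFu⟩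
      have hfu := hfmax _ hKu
      have hduz : dot u z = s⁻¹ * (c + b) := by
        show (∑ i, (s⁻¹ * (x i + y i)) * z i) = _
        rw [hbdef, hcdef]
        unfold dot
        rw [mul_add, Finset.mul_sum, Finset.mul_sum, ← Finset.sum_add_distrib]
        exact Finset.sum_congr rfl fun i _ => by ring
      have hduu : dot u u = 1 := by rw [dot_self]; exact hus
      simp only [hduz, hduu] at hfu
      have harith := arith ha1 (show -a ≤ b + c by linarith) hs hspos
      have hdiv : 2 * (b + c) / s = s⁻¹ * (c + b) + s⁻¹ * (c + b) := by
        field_simp; ring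
      rw [hdiv] at harith
      linarith
    refine ⟨x, hx, fun x1 hx1 y1 hy1 z1 hz1 => ?_⟩
    have hxxx : F S x x x = L := by
      rw [hxy, hyz]
      rw [hxy, hyz] at hFp'
      exact hFp'
    rw [hxxx]
    exact hmaxT x1 hx1 y1 hy1 z1 hz1

end FrobAux

/-- For a symmetric order-3 tensor `S` on `ℝ^d`, the Frobenius norm satisfies
`‖S‖_F ≤ d ‖S‖` where `‖S‖` is the operator norm. -/
theorem frobenius_le_dim_mul_opNorm
    (d : ℕ) (S : Fin d → Fin d → Fin d → ℝ)
    (hS : ∀ i j k, S i j k = S j i k ∧ S i j k = S i k j) :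
    Real.sqrt (∑ i, ∑ j, ∑ k, (S i j k) ^ 2) ≤ d * tensorOpNorm S := by
  rcases Nat.eq_zero_or_pos d with hd | hd
  · subst hd
    simp
  · obtain ⟨w, hw, hmax⟩ := FrobAux.banach hd hS
    set L := FrobAux.F S w w w with hLdef
    have hL0 : 0 ≤ L := by
      have h := hmax _ (FrobAux.sph_neg hw) w hw w hw
      rw [FrobAux.F_neg1] at h
      linarith
    have hslice : ∀ j k : Fin d, (∑ i, S i j k ^ 2) ≤ L ^ 2 := by
      intro j k
      by_cases h0 : ∑ i, S i j k ^ 2 = 0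
      · rw [h0]; positivity
      · have hpos : 0 < ∑ i, S i j k ^ 2 :=
          lt_of_le_of_ne (Finset.sum_nonneg fun i _ => sq_nonneg _) (Ne.symm h0)
        set n := Real.sqrt (∑ i, S i j k ^ 2) with hn
        have hnpos : 0 < n := Real.sqrt_pos.mpr hpos
        have hn0 : n ≠ 0 := ne_of_gt hnpos
        have hnsq : n ^ 2 = ∑ i, S i j k ^ 2 := Real.sq_sqrt hpos.le
        have hmem : (fun i => S i j k / n) ∈ FrobAux.sph d := by
          show ∑ i, (S i j k / n) ^ 2 = 1
          have he : ∑ i, (S i j k / n) ^ 2 = (∑ i, S i j k ^ 2) / n ^ 2 := by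
            rw [Finset.sum_div]
            exact Finset.sum_congr rfl fun i _ => by ring
          rw [he, ← hnsq]
          field_simp
        have hval : FrobAux.F S (fun i => S i j k / n) (FrobAux.bas d j) (FrobAux.bas d k)
            = n := by
          rw [FrobAux.F_bas]
          have he : ∑ i, S i j k * (S i j k / n) = (∑ i, S i j k ^ 2) / n := by
            rw [Finset.sum_div]
            exact Finset.sum_congr rfl fun i _ => by ring
          rw [he, ← hnsq, pow_two]
          field_simp
        have hle : n ≤ L := by
          have h := hmax _ hmem _ (FrobAux.bas_mem_sph j) _ (FrobAux.bas_mem_sph k)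
          rwa [hval] at h
        nlinarith
    have htot : (∑ i, ∑ j, ∑ k, S i j k ^ 2) ≤ (d : ℝ) ^ 2 * L ^ 2 := by
      have hre : (∑ i, ∑ j, ∑ k, (S i j k) ^ 2) = ∑ j, ∑ k, ∑ i, (S i j k) ^ 2 := by
        rw [Finset.sum_comm]
        exact Finset.sum_congr rfl fun j _ => Finset.sum_comm
      rw [hre]
      calc (∑ j : Fin d, ∑ k : Fin d, ∑ i, (S i j k) ^ 2)
          ≤ ∑ _j : Fin d, ∑ _k : Fin d, L ^ 2 :=
            Finset.sum_le_sum fun j _ => Finset.sum_le_sum fun k _ => hslice j k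
        _ = (d : ℝ) ^ 2 * L ^ 2 := by
            simp [Finset.sum_const, Finset.card_univ]
            ring
    have hsq : Real.sqrt (∑ i, ∑ j, ∑ k, (S i j k) ^ 2) ≤ (d : ℝ) * L := by
      have h := Real.sqrt_le_sqrt htot
      rwa [show (d : ℝ) ^ 2 * L ^ 2 = ((d : ℝ) * L) ^ 2 by ring,
        Real.sqrt_sq (by positivity)] at h
    have hLM : L ≤ tensorOpNorm S := by
      have hbdd : BddAbove (Set.range fun u : {u : Fin d → ℝ // ∑ i, (u i) ^ 2 = 1} =>
          ∑ i, ∑ j, ∑ k, S i j k * u.1 i * u.1 j * u.1 k) := by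
        refine ⟨L, ?_⟩
        rintro r ⟨u, rfl⟩
        exact hmax u.1 u.2 u.1 u.2 u.1 u.2
      exact le_ciSup hbdd ⟨w, hw⟩
    calc Real.sqrt (∑ i, ∑ j, ∑ k, (S i j k) ^ 2) ≤ (d : ℝ) * L := hsq
      _ ≤ d * tensorOpNorm S :=
          mul_le_mul_of_nonneg_left hLM (by positivity)
end

section
/- Let a, b > 0 and d ≥ 1. Then (2π)^{-d/2} ∫_{‖x‖ ≥ a√d} exp(−b√d ‖x‖) dx ≤ (d/e) · exp( d·(log(e/b) − (1/2) a b) ). In particular, if a ≥ (4/b) log(e/b), then the integral is at most (d/e) e^{−abd/4}. -/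
open MeasureTheory Set

private lemma gtb_bern (n : ℕ) (hn : 1 ≤ n) : (2:ℝ) ≤ (((n:ℝ)+1)/n)^n := by
  have hn' : (0:ℝ) < n := by exact_mod_cast hn
  have h1 : (((n:ℝ)+1)/n) = 1 + 1/n := by field_simp
  rw [h1]
  have := one_add_mul_le_pow (by linarith [one_div_nonneg.mpr hn'.le] : (-2:ℝ) ≤ 1/n) n
  calc (2:ℝ) = 1 + n * (1/n) := by rw [mul_one_div, div_self hn'.ne']; norm_num
    _ ≤ (1 + 1/n)^n := this

private lemma gtb_fact_bound (n : ℕ) (hn : 1 ≤ n) :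
    (n.factorial : ℝ) ≤ (((n:ℝ)+1)/2)^(n+1) * Real.exp (((n:ℝ)+1)/2 - 1) := by
  induction n, hn using Nat.le_induction with
  | base => norm_num [Nat.factorial]
  | succ n hn ih =>
    set A : ℝ := ((n:ℝ)+1)/2 with hA
    set B : ℝ := ((n:ℝ)+2)/2 with hB
    have hApos : 0 < A := by positivity
    have hBpos : 0 < B := by positivity
    have hBA : B = (((n:ℝ)+1+1)/((n:ℝ)+1)) * A := by
      rw [hA, hB]; field_simp; ring
    have hpow : 2 * A^(n+1) ≤ B^(n+1) := by
      rw [hBA, mul_pow]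
      have h2 : (2:ℝ) ≤ (((n:ℝ)+1+1)/((n:ℝ)+1))^(n+1) := by
        have := gtb_bern (n+1) (by omega)
        push_cast at this
        convert this using 3
      exact mul_le_mul_of_nonneg_right h2 (by positivity)
    have key : ((n:ℝ)+1) * A^(n+1) ≤ B^(n+2) := by
      calc ((n:ℝ)+1) * A^(n+1) ≤ B * (2 * A^(n+1)) := by
            rw [hB]; nlinarith [pow_pos hApos (n+1)]
        _ ≤ B * B^(n+1) := by gcongr
        _ = B^(n+2) := by rw [← pow_succ']
    have hexp : Real.exp (((n:ℝ)+1)/2 - 1) ≤ Real.exp (((n:ℝ)+1+1)/2 - 1) := by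
      apply Real.exp_le_exp.2; linarith
    calc ((n+1).factorial : ℝ) = ((n:ℝ)+1) * (n.factorial : ℝ) := by
          rw [Nat.factorial_succ]; push_cast; ring
      _ ≤ ((n:ℝ)+1) * (A^(n+1) * Real.exp (((n:ℝ)+1)/2 - 1)) := by gcongr
      _ = (((n:ℝ)+1) * A^(n+1)) * Real.exp (((n:ℝ)+1)/2 - 1) := by ring
      _ ≤ B^(n+2) * Real.exp (((n:ℝ)+1+1)/2 - 1) := by
          exact mul_le_mul key hexp (Real.exp_pos _).le (by positivity)
      _ = ((((n+1:ℕ):ℝ)+1)/2)^(n+1+1) * Real.exp ((((n+1:ℕ):ℝ)+1)/2 - 1) := by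
          rw [hB]; push_cast
          norm_num
          congr 2 <;> ring

private lemma gtb_gamma_step (n : ℕ) (hn : 1 ≤ n)
    (h : ((n:ℝ)/(2*Real.exp 1)) ^ ((n:ℝ)/2) ≤ Real.Gamma ((n:ℝ)/2 + 1)) :
    (((n:ℝ)+2)/(2*Real.exp 1)) ^ (((n:ℝ)+2)/2) ≤ Real.Gamma (((n:ℝ)+2)/2 + 1) := by
  have hn' : (0:ℝ) < n := by exact_mod_cast hn
  have he : (0:ℝ) < Real.exp 1 := Real.exp_pos 1
  have hG : Real.Gamma (((n:ℝ)+2)/2 + 1) = ((n:ℝ)/2 + 1) * Real.Gamma ((n:ℝ)/2 + 1) := by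
    have : ((n:ℝ)+2)/2 + 1 = ((n:ℝ)/2 + 1) + 1 := by ring
    rw [this, Real.Gamma_add_one (by positivity)]
  rw [hG]
  have hkey : (((n:ℝ)+2)/n) ^ ((n:ℝ)/2) ≤ Real.exp 1 := by
    have hx : (0:ℝ) < ((n:ℝ)+2)/n := by positivity
    rw [Real.rpow_def_of_pos hx, Real.exp_le_exp]
    have hlog : Real.log (((n:ℝ)+2)/n) ≤ 2/n := by
      have := Real.log_le_sub_one_of_pos hx
      have h2 : ((n:ℝ)+2)/n - 1 = 2/n := by field_simp; ring
      linarith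
    calc Real.log (((n:ℝ)+2)/n) * ((n:ℝ)/2) ≤ (2/n) * ((n:ℝ)/2) := by
          apply mul_le_mul_of_nonneg_right hlog (by positivity)
      _ = 1 := by field_simp
  have hsplit : (((n:ℝ)+2)/(2*Real.exp 1)) ^ (((n:ℝ)+2)/2)
      = (((n:ℝ)+2)/(2*Real.exp 1)) ^ ((n:ℝ)/2) * (((n:ℝ)+2)/(2*Real.exp 1)) := by
    have h0 : (((n:ℝ)+2))/2 = (n:ℝ)/2 + 1 := by ring
    rw [h0, Real.rpow_add_one (by positivity : (0:ℝ) < ((n:ℝ)+2)/(2*Real.exp 1)).ne']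
  rw [hsplit]
  have hbase : (((n:ℝ)+2)/(2*Real.exp 1)) ^ ((n:ℝ)/2)
      ≤ Real.exp 1 * ((n:ℝ)/(2*Real.exp 1)) ^ ((n:ℝ)/2) := by
    have : (((n:ℝ)+2)/(2*Real.exp 1)) = (((n:ℝ)+2)/n) * ((n:ℝ)/(2*Real.exp 1)) := by
      field_simp
    rw [this, Real.mul_rpow (by positivity) (by positivity)]
    exact mul_le_mul_of_nonneg_right hkey (by positivity)
  calc (((n:ℝ)+2)/(2*Real.exp 1)) ^ ((n:ℝ)/2) * (((n:ℝ)+2)/(2*Real.exp 1))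
      ≤ (Real.exp 1 * ((n:ℝ)/(2*Real.exp 1)) ^ ((n:ℝ)/2)) * (((n:ℝ)+2)/(2*Real.exp 1)) := by
        apply mul_le_mul_of_nonneg_right hbase (by positivity)
    _ = ((n:ℝ)/2 + 1) * ((n:ℝ)/(2*Real.exp 1)) ^ ((n:ℝ)/2) := by
        field_simp
    _ ≤ ((n:ℝ)/2 + 1) * Real.Gamma ((n:ℝ)/2 + 1) := by
        apply mul_le_mul_of_nonneg_left h (by positivity)

private lemma gtb_gamma_lower (n : ℕ) (hn : 1 ≤ n) :
    ((n:ℝ)/(2*Real.exp 1)) ^ ((n:ℝ)/2) ≤ Real.Gamma ((n:ℝ)/2 + 1) := by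
  have he : (0:ℝ) < Real.exp 1 := Real.exp_pos 1
  have h2e : (2:ℝ) ≤ Real.exp 1 := by
    have := Real.add_one_le_exp 1; linarith
  obtain ⟨m, rfl⟩ : ∃ m, n = m + 1 := ⟨n - 1, by omega⟩
  clear hn
  induction m using Nat.strong_induction_on with
  | _ m ih =>
    match m with
    | 0 =>
      have hΓ : Real.Gamma ((1:ℝ)/2 + 1) = Real.sqrt Real.pi / 2 := by
        rw [Real.Gamma_add_one (by norm_num), Real.Gamma_one_half_eq]
        ring
      push_cast
      rw [hΓ]
      have h1 : ((1:ℝ)/(2*Real.exp 1)) ^ ((1:ℝ)/2) ≤ ((1:ℝ)/4) ^ ((1:ℝ)/2) := by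
        apply Real.rpow_le_rpow (by positivity) _ (by norm_num)
        rw [div_le_div_iff₀ (by positivity) (by norm_num)]
        linarith
      have h2 : ((1:ℝ)/4) ^ ((1:ℝ)/2) = 1/2 := by
        rw [← Real.sqrt_eq_rpow]
        rw [show (1:ℝ)/4 = (1/2)^2 by norm_num, Real.sqrt_sq (by norm_num)]
      have h3 : (1:ℝ)/2 ≤ Real.sqrt Real.pi / 2 := by
        have : (1:ℝ) ≤ Real.sqrt Real.pi := by
          rw [show (1:ℝ) = Real.sqrt 1 by simp]
          exact Real.sqrt_le_sqrt (by linarith [Real.pi_gt_three])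
        linarith
      linarith [h1, h2 ▸ h1]
    | 1 =>
      push_cast
      norm_num
      rw [div_le_one (by positivity)]
      linarith
    | (m+2) =>
      have ihm := ih m (by omega)
      have step := gtb_gamma_step (m+1) (by omega) (by exact_mod_cast ihm)
      push_cast at step ⊢
      convert step using 2 <;> ring

private lemma gtb_rpow_half_nat (x : ℝ) (hx : 0 ≤ x) (d : ℕ) :
    x ^ ((d:ℝ)/2) = Real.sqrt x ^ d := by
  rw [show ((d:ℝ)/2) = (1/2)*(d:ℝ) by ring, Real.rpow_mul hx, Real.rpow_natCast,
    ← Real.sqrt_eq_rpow]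

private lemma gtb_eq_of_sq (x y : ℝ) (hx : 0 ≤ x) (hy : 0 ≤ y) (h : x^2 = y^2) : x = y := by
  have h1 := Real.sqrt_sq hx
  rw [← h1, h, Real.sqrt_sq hy]

private lemma gtb_sqrt_exp_pow (d : ℕ) :
    Real.sqrt (Real.exp 1) ^ d = Real.exp ((d:ℝ)/2) := by
  rw [Real.sqrt_eq_rpow, ← Real.rpow_natCast (Real.exp 1 ^ ((1:ℝ)/2)) d,
    ← Real.rpow_mul (Real.exp_pos 1).le, Real.exp_one_rpow]
  ring_nf

private lemma gtb_coeff_bound (d : ℕ) (hd2 : 2 ≤ d) (b : ℝ) (hb : 0 < b) :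
    (2*Real.pi) ^ (-(d:ℝ)/2) *
      ((d:ℝ) * ((Real.sqrt Real.pi ^ d / Real.Gamma ((d:ℝ)/2 + 1)) *
        ((2/(b*Real.sqrt d))^d * (((d-1).factorial : ℝ)))))
      ≤ (d:ℝ)/Real.exp 1 * (Real.exp 1/b)^d := by
  have hd1 : 1 ≤ d := by omega
  have hd0 : (0:ℝ) < d := by exact_mod_cast Nat.lt_of_lt_of_le Nat.zero_lt_one hd1
  have he : (0:ℝ) < Real.exp 1 := Real.exp_pos 1
  have hπ : (0:ℝ) < Real.pi := Real.pi_pos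
  set G : ℝ := Real.sqrt ((d:ℝ)/(2*Real.exp 1)) with hGdef
  have hG : 0 < G := Real.sqrt_pos.2 (by positivity)
  have hΓlb : G ^ d ≤ Real.Gamma ((d:ℝ)/2 + 1) := by
    rw [hGdef, ← gtb_rpow_half_nat _ (by positivity)]
    exact gtb_gamma_lower d hd1
  have hΓ : (0:ℝ) < Real.Gamma ((d:ℝ)/2 + 1) := Real.Gamma_pos_of_pos (by positivity)
  set E : ℝ := Real.exp ((d:ℝ)/2 - 1) with hEdef
  have hF : ((d-1).factorial : ℝ) ≤ ((d:ℝ)/2)^d * E := by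
    have h := gtb_fact_bound (d-1) (by omega)
    have hc : ((d-1:ℕ):ℝ) + 1 = (d:ℝ) := by
      push_cast [Nat.cast_sub hd1]; ring
    rw [hc] at h
    rwa [show (d-1)+1 = d by omega] at h
  have hP : (2*Real.pi) ^ (-(d:ℝ)/2) = ((Real.sqrt (2*Real.pi))⁻¹)^d := by
    rw [show (-(d:ℝ)/2) = -((d:ℝ)/2) by ring, Real.rpow_neg (by positivity),
      gtb_rpow_half_nat _ (by positivity), inv_pow]
  have step1 : (2*Real.pi) ^ (-(d:ℝ)/2) *
      ((d:ℝ) * ((Real.sqrt Real.pi ^ d / Real.Gamma ((d:ℝ)/2 + 1)) *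
        ((2/(b*Real.sqrt d))^d * (((d-1).factorial : ℝ)))))
      ≤ ((Real.sqrt (2*Real.pi))⁻¹)^d *
      ((d:ℝ) * ((Real.sqrt Real.pi ^ d / G^d) *
        ((2/(b*Real.sqrt d))^d * (((d:ℝ)/2)^d * E)))) := by
    rw [hP]
    gcongr
  have hbd : 0 < b * Real.sqrt d := by positivity
  have hbase : (Real.sqrt (2*Real.pi))⁻¹ *
      (Real.sqrt Real.pi * (2/(b*Real.sqrt d) * ((d:ℝ)/2 / G)))
      = Real.sqrt (Real.exp 1) / b := by
    have e1 : (Real.sqrt (2*Real.pi))^2 = 2*Real.pi := Real.sq_sqrt (by positivity)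
    have e2 : (Real.sqrt Real.pi)^2 = Real.pi := Real.sq_sqrt hπ.le
    have e3 : (Real.sqrt (d:ℝ))^2 = (d:ℝ) := Real.sq_sqrt hd0.le
    have e4 : G^2 = (d:ℝ)/(2*Real.exp 1) := Real.sq_sqrt (by positivity)
    have e5 : (Real.sqrt (Real.exp 1))^2 = Real.exp 1 := Real.sq_sqrt he.le
    have hs2 : (0:ℝ) < Real.sqrt (2*Real.pi) := Real.sqrt_pos.2 (by positivity)
    have hsd : (0:ℝ) < Real.sqrt (d:ℝ) := Real.sqrt_pos.2 hd0
    apply gtb_eq_of_sq _ _ (by positivity) (by positivity)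
    rw [mul_pow, mul_pow, mul_pow, div_pow, div_pow, mul_pow, inv_pow,
      e1, e2, e3, e4]
    rw [show (Real.sqrt (Real.exp 1)/b)^2 = Real.exp 1/b^2 by
      rw [div_pow, e5]]
    field_simp
  have step2 : ((Real.sqrt (2*Real.pi))⁻¹)^d *
      ((d:ℝ) * ((Real.sqrt Real.pi ^ d / G^d) *
        ((2/(b*Real.sqrt d))^d * (((d:ℝ)/2)^d * E))))
      = (d:ℝ) * E * (Real.sqrt (Real.exp 1) / b)^d := by
    rw [← hbase, mul_pow, mul_pow, mul_pow, div_pow, div_pow]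
    simp only [one_div, div_pow, inv_pow]
    ring
  have step3 : (d:ℝ) * E * (Real.sqrt (Real.exp 1) / b)^d
      = (d:ℝ)/Real.exp 1 * (Real.exp 1/b)^d := by
    have hme : Real.exp ((d:ℝ)/2 - 1) * Real.exp ((d:ℝ)/2)
        = Real.exp (d:ℝ) / Real.exp 1 := by
      rw [← Real.exp_add, show (d:ℝ)/2 - 1 + (d:ℝ)/2 = (d:ℝ) - 1 by ring, Real.exp_sub]
    rw [div_pow, div_pow, gtb_sqrt_exp_pow, Real.exp_one_pow, hEdef]
    calc (d:ℝ) * Real.exp ((d:ℝ)/2 - 1) * (Real.exp ((d:ℝ)/2)/b^d)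
        = (d:ℝ) * (Real.exp ((d:ℝ)/2 - 1) * Real.exp ((d:ℝ)/2)) / b^d := by ring
      _ = (d:ℝ) * (Real.exp (d:ℝ)/Real.exp 1)/b^d := by rw [hme]
      _ = (d:ℝ)/Real.exp 1 * (Real.exp (d:ℝ)/b^d) := by ring
  exact step1.trans (step2.trans_le step3.le)

private lemma gtb_intOn (d : ℕ) (hd : 1 ≤ d) (c : ℝ) (hc : 0 < c) :
    IntegrableOn (fun y : ℝ => y ^ (d-1) * Real.exp (-(c*y))) (Set.Ioi 0) := by
  have hd1 : (1:ℝ) ≤ d := by exact_mod_cast hd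
  have h := integrableOn_rpow_mul_exp_neg_mul_rpow
    (show (-1:ℝ) < (d:ℝ)-1 by linarith) (by norm_num : (0:ℝ) < 1) hc
  apply h.congr_fun _ measurableSet_Ioi
  intro y hy
  have hy' : (0:ℝ) < y := hy
  simp only [Real.rpow_one]
  congr 1
  · rw [show ((d:ℝ)-1) = ((d-1:ℕ):ℝ) by push_cast [Nat.cast_sub hd]; ring, Real.rpow_natCast]
  · ring_nf

private lemma gtb_int_val (d : ℕ) (hd : 1 ≤ d) (c : ℝ) (hc : 0 < c) :
    ∫ y in Set.Ioi (0:ℝ), y ^ (d-1) * Real.exp (-(c*y))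
      = (1/c)^d * ((d-1).factorial : ℝ) := by
  have h := Real.integral_rpow_mul_exp_neg_mul_Ioi
    (show (0:ℝ) < (d:ℝ) by exact_mod_cast hd) hc
  rw [show ∫ y in Set.Ioi (0:ℝ), y ^ (d-1) * Real.exp (-(c*y))
      = ∫ t in Set.Ioi (0:ℝ), t ^ ((d:ℝ)-1) * Real.exp (-(c*t)) from
    setIntegral_congr_fun measurableSet_Ioi (fun y hy => by
      congr 1
      rw [show ((d:ℝ)-1) = ((d-1:ℕ):ℝ) by push_cast [Nat.cast_sub hd]; ring,
        Real.rpow_natCast]),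
    h]
  rw [show (d:ℝ) = ((d-1:ℕ):ℝ) + 1 by push_cast [Nat.cast_sub hd]; ring,
    Real.Gamma_nat_eq_factorial]
  rw [← Real.rpow_natCast (1/c) d]
  norm_num [Nat.cast_sub hd]

private lemma gtb_tail_bound (d : ℕ) (hd : 1 ≤ d) (c R : ℝ) (hc : 0 < c) (hR : 0 < R) :
    ∫ y in Set.Ioi (0:ℝ), y ^ (d-1) * ((Set.Ici R).indicator (fun r => Real.exp (-(c*r))) y)
      ≤ Real.exp (-(c*R/2)) * ((2/c)^d * ((d-1).factorial : ℝ)) := by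
  have hc2 : 0 < c/2 := by linarith
  have hfeq : (fun y : ℝ => y ^ (d-1) * ((Set.Ici R).indicator (fun r => Real.exp (-(c*r))) y))
      = (Set.Ici R).indicator (fun y => y ^ (d-1) * Real.exp (-(c*y))) := by
    funext y
    by_cases hy : y ∈ Set.Ici R <;> simp [Set.indicator, hy]
  have hintL : IntegrableOn
      (fun y : ℝ => y ^ (d-1) * ((Set.Ici R).indicator (fun r => Real.exp (-(c*r))) y))
      (Set.Ioi 0) := by
    rw [hfeq]
    exact (gtb_intOn d hd c hc).indicator measurableSet_Ici
  have hintR : IntegrableOn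
      (fun y : ℝ => Real.exp (-(c*R/2)) * (y ^ (d-1) * Real.exp (-(c/2*y)))) (Set.Ioi 0) :=
    (gtb_intOn d hd (c/2) hc2).const_mul _
  have hmono : ∀ y ∈ Set.Ioi (0:ℝ),
      y ^ (d-1) * ((Set.Ici R).indicator (fun r => Real.exp (-(c*r))) y)
        ≤ Real.exp (-(c*R/2)) * (y ^ (d-1) * Real.exp (-(c/2*y))) := by
    intro y hy
    have hy' : (0:ℝ) < y := hy
    by_cases hyR : y ∈ Set.Ici R
    · have hyR' : R ≤ y := hyR
      rw [Set.indicator_of_mem hyR]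
      have hexp : Real.exp (-(c*y)) ≤ Real.exp (-(c*R/2)) * Real.exp (-(c/2*y)) := by
        rw [← Real.exp_add, Real.exp_le_exp]
        nlinarith
      calc y ^ (d-1) * Real.exp (-(c*y))
          ≤ y ^ (d-1) * (Real.exp (-(c*R/2)) * Real.exp (-(c/2*y))) :=
            mul_le_mul_of_nonneg_left hexp (by positivity)
        _ = Real.exp (-(c*R/2)) * (y ^ (d-1) * Real.exp (-(c/2*y))) := by ring
    · rw [Set.indicator_of_notMem hyR, mul_zero]
      positivity
  calc ∫ y in Set.Ioi (0:ℝ), y ^ (d-1) * ((Set.Ici R).indicator (fun r => Real.exp (-(c*r))) y)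
      ≤ ∫ y in Set.Ioi (0:ℝ), Real.exp (-(c*R/2)) * (y ^ (d-1) * Real.exp (-(c/2*y))) :=
        setIntegral_mono_on hintL hintR measurableSet_Ioi hmono
    _ = Real.exp (-(c*R/2)) * ∫ y in Set.Ioi (0:ℝ), y ^ (d-1) * Real.exp (-(c/2*y)) :=
        integral_const_mul _ _
    _ = Real.exp (-(c*R/2)) * ((2/c)^d * ((d-1).factorial : ℝ)) := by
        rw [gtb_int_val d hd (c/2) hc2]
        norm_num

private lemma gtb_tail_one (c R : ℝ) (hc : 0 < c) (hR : 0 < R) :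
    ∫ y in Set.Ioi (0:ℝ), ((Set.Ici R).indicator (fun r => Real.exp (-(c*r))) y)
      = Real.exp (-(c*R)) / c := by
  rw [integral_indicator measurableSet_Ici, Measure.restrict_restrict measurableSet_Ici]
  rw [Set.inter_eq_self_of_subset_left
    (show Set.Ici R ⊆ Set.Ioi 0 from fun y hy => lt_of_lt_of_le hR hy)]
  rw [integral_Ici_eq_integral_Ioi]
  have h := integral_comp_mul_left_Ioi (fun x => Real.exp (-x)) R hc
  simp only [smul_eq_mul] at h
  calc ∫ x in Set.Ioi R, Real.exp (-(c*x))
      = c⁻¹ * ∫ x in Set.Ioi (c*R), Real.exp (-x) := by rw [← h]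
    _ = Real.exp (-(c*R)) / c := by rw [integral_exp_neg_Ioi]; field_simp

/-- For `a, b > 0` and `d ≥ 1`,
`(2π)^{-d/2} ∫_{‖x‖ ≥ a√d} exp(−b√d‖x‖) dx ≤ (d/e) exp(d (log(e/b) − ab/2))`,
and in particular, if `a ≥ (4/b) log(e/b)`, the integral is at most `(d/e) e^{−abd/4}`. -/
theorem gaussian_tail_exponential_bound
    (d : ℕ) (hd : 1 ≤ d) (a b : ℝ) (ha : 0 < a) (hb : 0 < b) :
    (2 * Real.pi) ^ (-(d : ℝ) / 2) *
        ∫ x in {x : EuclideanSpace ℝ (Fin d) | a * Real.sqrt d ≤ ‖x‖},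
          Real.exp (-(b * Real.sqrt d * ‖x‖))
      ≤ (d : ℝ) / Real.exp 1 *
          Real.exp ((d : ℝ) * (Real.log (Real.exp 1 / b) - a * b / 2)) ∧
    ((4 / b) * Real.log (Real.exp 1 / b) ≤ a →
      (2 * Real.pi) ^ (-(d : ℝ) / 2) *
          ∫ x in {x : EuclideanSpace ℝ (Fin d) | a * Real.sqrt d ≤ ‖x‖},
            Real.exp (-(b * Real.sqrt d * ‖x‖))
        ≤ (d : ℝ) / Real.exp 1 * Real.exp (-(a * b * d) / 4)) := by
  have hd0 : (0:ℝ) < d := by exact_mod_cast hd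
  have he : (0:ℝ) < Real.exp 1 := Real.exp_pos 1
  have hπ : (0:ℝ) < Real.pi := Real.pi_pos
  have hsd : (0:ℝ) < Real.sqrt d := Real.sqrt_pos.2 hd0
  haveI : Nonempty (Fin d) := ⟨⟨0, hd⟩⟩
  set E := EuclideanSpace ℝ (Fin d)
  set c : ℝ := b * Real.sqrt d with hcdef
  set R : ℝ := a * Real.sqrt d with hRdef
  have hc : 0 < c := by positivity
  have hR : 0 < R := by positivity
  have hcR : c * R = a * b * (d:ℝ) := by
    calc c * R = a * b * (Real.sqrt d * Real.sqrt d) := by rw [hcdef, hRdef]; ring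
      _ = a * b * (d:ℝ) := by rw [Real.mul_self_sqrt hd0.le]
  set F : ℝ → ℝ := (Set.Ici R).indicator (fun r => Real.exp (-(c * r))) with hF
  have hset : MeasurableSet {x : E | R ≤ ‖x‖} :=
    measurableSet_le measurable_const measurable_norm
  have step1 : ∫ x in {x : E | R ≤ ‖x‖}, Real.exp (-(c * ‖x‖)) = ∫ x : E, F ‖x‖ := by
    rw [← integral_indicator hset]
    apply integral_congr_ae
    filter_upwards with x
    by_cases hx : R ≤ ‖x‖ <;> simp [hF, Set.indicator, hx]
  have step2 : ∫ x : E, F ‖x‖ = (d:ℝ) * ((volume (Metric.ball (0:E) 1)).toReal *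
      ∫ y in Set.Ioi (0:ℝ), y ^ (d - 1) * F y) := by
    rw [integral_fun_norm_addHaar volume F, finrank_euclideanSpace_fin]
    simp only [nsmul_eq_mul, smul_eq_mul]
    rfl
  have step3 : (volume (Metric.ball (0:E) 1)).toReal
      = Real.sqrt Real.pi ^ d / Real.Gamma ((d:ℝ)/2 + 1) := by
    rw [EuclideanSpace.volume_ball]
    simp only [Fintype.card_fin, ENNReal.ofReal_one, one_pow, one_mul]
    rw [ENNReal.toReal_ofReal (by positivity)]
  -- the exponential identity for the RHS
  have hexp_id : (d:ℝ)/Real.exp 1 * Real.exp ((d:ℝ)*(Real.log (Real.exp 1/b) - a*b/2))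
      = Real.exp (-(a*b*(d:ℝ))/2) * ((d:ℝ)/Real.exp 1 * (Real.exp 1/b)^d) := by
    rw [show (d:ℝ)*(Real.log (Real.exp 1/b) - a*b/2)
        = (-(a*b*(d:ℝ))/2) + (d:ℝ)*Real.log (Real.exp 1/b) by ring]
    rw [Real.exp_add, Real.exp_nat_mul, Real.exp_log (by positivity)]
    ring
  -- main bound
  have key : (2 * Real.pi) ^ (-(d : ℝ) / 2) *
      (∫ x in {x : E | R ≤ ‖x‖}, Real.exp (-(c * ‖x‖)))
      ≤ (d : ℝ) / Real.exp 1 *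
        Real.exp ((d : ℝ) * (Real.log (Real.exp 1 / b) - a * b / 2)) := by
    rw [step1, step2, step3, hexp_id]
    rcases eq_or_lt_of_le hd with hd1 | hd2
    · -- d = 1
      have hd1' : d = 1 := hd1.symm
      subst hd1'
      have hJ : ∫ y in Set.Ioi (0:ℝ), y ^ (1 - 1) * F y = Real.exp (-(c*R)) / c := by
        simp only [Nat.sub_self, pow_zero, one_mul]
        exact gtb_tail_one c R hc hR
      rw [hJ]
      have hc1 : c = b := by rw [hcdef, Nat.cast_one, Real.sqrt_one, mul_one]
      have hR1 : R = a := by rw [hRdef, Nat.cast_one, Real.sqrt_one, mul_one]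
      rw [hc1, hR1, Nat.cast_one]
      have hΓhalf : Real.Gamma ((1:ℝ)/2 + 1) = Real.sqrt Real.pi / 2 := by
        rw [Real.Gamma_add_one (by norm_num), Real.Gamma_one_half_eq]
        ring
      rw [hΓhalf]
      have hpos1 : (0:ℝ) < Real.sqrt Real.pi := Real.sqrt_pos.2 hπ
      have hsimpl : Real.sqrt Real.pi ^ 1 / (Real.sqrt Real.pi / 2) = 2 := by
        rw [pow_one]
        field_simp
      rw [hsimpl]
      have hP1 : (2*Real.pi) ^ (-(1:ℝ)/2) ≤ 1/2 := by
        have h1 : (2*Real.pi) ^ (-(1:ℝ)/2) = (Real.sqrt (2*Real.pi))⁻¹ := by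
          rw [show (-(1:ℝ)/2) = -(((1:ℕ):ℝ)/2) by norm_num, Real.rpow_neg (by positivity),
            gtb_rpow_half_nat _ (by positivity), pow_one]
        rw [h1]
        have h2 : (2:ℝ) ≤ Real.sqrt (2*Real.pi) := by
          have h4 : ((2:ℝ))^2 ≤ 2*Real.pi := by nlinarith [Real.pi_gt_three]
          nlinarith [Real.sq_sqrt (show (0:ℝ) ≤ 2*Real.pi by positivity),
            Real.sqrt_nonneg (2*Real.pi)]
        rw [inv_le_comm₀ (by positivity) (by norm_num)]
        linarith
      have hE1 : Real.exp (-(b*a)) ≤ Real.exp (-(a*b*1)/2) := by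
        rw [Real.exp_le_exp]
        nlinarith
      have hRHS : Real.exp (-(a*b*1)/2) * ((1:ℝ)/Real.exp 1 * (Real.exp 1/b)^1)
          = Real.exp (-(a*b*1)/2) / b := by
        rw [pow_one]
        field_simp
      rw [hRHS]
      calc (2*Real.pi) ^ (-(1:ℝ)/2) * (1 * (2 * (Real.exp (-(b*a))/b)))
          ≤ (1/2) * (1 * (2 * (Real.exp (-(a*b*1)/2)/b))) := by
            apply mul_le_mul hP1 _ (by positivity) (by norm_num)
            gcongr
        _ = Real.exp (-(a*b*1)/2) / b := by ring
    · -- d ≥ 2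
      have hd2' : 2 ≤ d := hd2
      have hJ := gtb_tail_bound d hd c R hc hR
      have hVpos : (0:ℝ) < Real.sqrt Real.pi ^ d / Real.Gamma ((d:ℝ)/2 + 1) := by
        have := Real.Gamma_pos_of_pos (show (0:ℝ) < (d:ℝ)/2 + 1 by positivity)
        positivity
      have hPpos : (0:ℝ) < (2*Real.pi) ^ (-(d:ℝ)/2) := by positivity
      calc (2*Real.pi) ^ (-(d:ℝ)/2) *
          ((d:ℝ) * ((Real.sqrt Real.pi ^ d / Real.Gamma ((d:ℝ)/2 + 1)) *
            ∫ y in Set.Ioi (0:ℝ), y ^ (d-1) * F y))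
          ≤ (2*Real.pi) ^ (-(d:ℝ)/2) *
          ((d:ℝ) * ((Real.sqrt Real.pi ^ d / Real.Gamma ((d:ℝ)/2 + 1)) *
            (Real.exp (-(c*R/2)) * ((2/c)^d * ((d-1).factorial : ℝ))))) := by
            gcongr
        _ = Real.exp (-(a*b*(d:ℝ))/2) * ((2*Real.pi) ^ (-(d:ℝ)/2) *
            ((d:ℝ) * ((Real.sqrt Real.pi ^ d / Real.Gamma ((d:ℝ)/2 + 1)) *
              ((2/(b*Real.sqrt d))^d * ((d-1).factorial : ℝ))))) := by
            rw [show -(c*R/2) = -(a*b*(d:ℝ))/2 by rw [← hcR]; ring, hcdef]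
            ring
        _ ≤ Real.exp (-(a*b*(d:ℝ))/2) * ((d:ℝ)/Real.exp 1 * (Real.exp 1/b)^d) := by
            apply mul_le_mul_of_nonneg_left (gtb_coeff_bound d hd2' b hb) (Real.exp_pos _).le
  constructor
  · exact key
  · intro hA
    apply key.trans
    have hlog : Real.log (Real.exp 1/b) ≤ a*b/4 := by
      have := mul_le_mul_of_nonneg_left hA (le_of_lt (show (0:ℝ) < b/4 by positivity))
      have hb4 : b/4 * (4/b * Real.log (Real.exp 1/b)) = Real.log (Real.exp 1/b) := by
        field_simp
      rw [hb4] at this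
      linarith [this]
    have : (d:ℝ) * (Real.log (Real.exp 1/b) - a*b/2) ≤ -(a*b*(d:ℝ))/4 := by
      have h1 : Real.log (Real.exp 1/b) - a*b/2 ≤ -(a*b)/4 := by linarith
      calc (d:ℝ) * (Real.log (Real.exp 1/b) - a*b/2) ≤ (d:ℝ) * (-(a*b)/4) :=
            mul_le_mul_of_nonneg_left h1 hd0.le
        _ = -(a*b*(d:ℝ))/4 := by ring
    gcongr
end

section
/- Let γ be a probability measure, U a measurable set, r measurable with r·1_U ∈ L^{ak}(γ), g ∈ L^b(γ), e^{cr}·1_U ∈ L^1(γ), ∫_U r dγ = 0, where 1/a + 1/b + 1/c = 1 with a,b,c ∈ [1,∞]. Then |∫_U (e^r − Σ_{j=0}^{k−1} r^j/j!) g dγ| ≤ (1/k!) ‖r 1_U‖_{ak}^k ‖g‖_b ‖e^r 1_U‖_c. -/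
open MeasureTheory
open scoped ENNReal

set_option maxHeartbeats 1000000

open intervalIntegral

lemma exp_taylor_int (n : ℕ) (x : ℝ) :
    Real.exp x - ∑ j ∈ Finset.range (n + 1), x ^ j / (Nat.factorial j)
      = ∫ s in (0:ℝ)..1, x ^ (n + 1) * ((1 - s) ^ n / (Nat.factorial n)) * Real.exp (s * x) := by
  induction n with
  | zero =>
      have hftc : ∫ s in (0:ℝ)..1, x * Real.exp (s * x)
          = Real.exp (1 * x) - Real.exp (0 * x) := by
        refine integral_eq_sub_of_hasDerivAt (f := fun t : ℝ => Real.exp (t * x)) (fun s _ => ?_) ?_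
        · show HasDerivAt (fun t : ℝ => Real.exp (t * x)) (x * Real.exp (s * x)) s
          have := ((hasDerivAt_id s).mul_const x).exp
          simpa [mul_comm] using this
        · exact (Continuous.intervalIntegrable (by fun_prop) _ _)
      have heq : (∫ s in (0:ℝ)..1, x ^ (0 + 1) * ((1 - s) ^ 0 / ((Nat.factorial 0 : ℕ) : ℝ)) * Real.exp (s * x))
          = ∫ s in (0:ℝ)..1, x * Real.exp (s * x) := by
        apply intervalIntegral.integral_congr; intro s _; norm_num
      rw [heq, hftc]
      norm_num [Finset.sum_range_one]
  | succ n ih =>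
      set C : ℝ := -(x ^ (n + 1) / (Nat.factorial (n + 1))) with hC
      have hfac : ((Nat.factorial (n + 1) : ℕ) : ℝ) = (n + 1) * (Nat.factorial n) := by
        rw [Nat.factorial_succ]; push_cast; ring
      have hfacn : ((Nat.factorial n : ℕ) : ℝ) ≠ 0 := by
        exact_mod_cast Nat.factorial_ne_zero n
      have hfacn1 : ((Nat.factorial (n + 1) : ℕ) : ℝ) ≠ 0 := by
        exact_mod_cast Nat.factorial_ne_zero (n + 1)
      have hderiv : ∀ s ∈ Set.uIcc (0:ℝ) 1,
          HasDerivAt (fun s : ℝ => C * ((1 - s) ^ (n + 1) * Real.exp (s * x)))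
            (C * ((-(((n:ℝ) + 1) * (1 - s) ^ n)) * Real.exp (s * x)
              + (1 - s) ^ (n + 1) * (Real.exp (s * x) * x))) s := by
        intro s _
        have h1 : HasDerivAt (fun s : ℝ => (1 - s) ^ (n + 1))
            (-(((n:ℝ) + 1) * (1 - s) ^ n)) s := by
          have h := (((hasDerivAt_id s).const_sub 1).pow (n + 1))
          simp only [id_eq, Nat.add_sub_cancel] at h
          exact h.congr_deriv (by push_cast; ring)
        have h2 : HasDerivAt (fun s : ℝ => Real.exp (s * x)) (Real.exp (s * x) * x) s := by
          have := ((hasDerivAt_id s).mul_const x).exp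
          simpa using this
        have := (h1.mul h2).const_mul C
        exact this
      have hintval : ∫ s in (0:ℝ)..1,
          (C * ((-(((n:ℝ) + 1) * (1 - s) ^ n)) * Real.exp (s * x)
              + (1 - s) ^ (n + 1) * (Real.exp (s * x) * x)))
          = x ^ (n + 1) / (Nat.factorial (n + 1)) := by
        rw [integral_eq_sub_of_hasDerivAt hderiv
          (Continuous.intervalIntegrable (by fun_prop) _ _)]
        simp [hC]
      have hAB : ∀ s : ℝ,
          (C * ((-(((n:ℝ) + 1) * (1 - s) ^ n)) * Real.exp (s * x)
              + (1 - s) ^ (n + 1) * (Real.exp (s * x) * x)))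
          = x ^ (n + 1) * ((1 - s) ^ n / (Nat.factorial n)) * Real.exp (s * x)
            - x ^ (n + 1 + 1) * ((1 - s) ^ (n + 1) / (Nat.factorial (n + 1))) * Real.exp (s * x) := by
        intro s
        rw [hC, hfac]
        field_simp
        ring
      have hIA : IntervalIntegrable
          (fun s : ℝ => x ^ (n + 1) * ((1 - s) ^ n / (Nat.factorial n)) * Real.exp (s * x))
          MeasureTheory.volume 0 1 := (Continuous.intervalIntegrable (by fun_prop) _ _)
      have hIB : IntervalIntegrable
          (fun s : ℝ => x ^ (n + 1 + 1) * ((1 - s) ^ (n + 1) / (Nat.factorial (n + 1))) * Real.exp (s * x))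
          MeasureTheory.volume 0 1 := (Continuous.intervalIntegrable (by fun_prop) _ _)
      have hsplit : (∫ s in (0:ℝ)..1, x ^ (n + 1) * ((1 - s) ^ n / (Nat.factorial n)) * Real.exp (s * x))
          - (∫ s in (0:ℝ)..1, x ^ (n + 1 + 1) * ((1 - s) ^ (n + 1) / (Nat.factorial (n + 1))) * Real.exp (s * x))
          = x ^ (n + 1) / (Nat.factorial (n + 1)) := by
        rw [← intervalIntegral.integral_sub hIA hIB, ← hintval]
        apply intervalIntegral.integral_congr
        intro s _
        exact (hAB s).symm
      rw [Finset.sum_range_succ]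
      linarith [hsplit, ih]

-- auxiliary: average lower bound via 1 + y ≤ exp y
lemma avg_lower {α : Type*} [MeasurableSpace α] (γ : Measure α) [IsProbabilityMeasure γ]
    (U : Set α) (r : α → ℝ)
    (hri : IntegrableOn r U γ) (hr0 : ∫ x in U, r x ∂γ = 0)
    {t : ℝ} (hexp : IntegrableOn (fun x => Real.exp (t * r x)) U γ) :
    (γ U).toReal ≤ ∫ x in U, Real.exp (t * r x) ∂γ := by
  have h1 : ∫ x in U, (1 + t * r x) ∂γ = (γ U).toReal := by
    rw [integral_add (integrable_const _) (hri.const_mul t)]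
    rw [MeasureTheory.integral_const_mul, hr0, setIntegral_const]
    simp [measureReal_def]
  rw [← h1]
  refine integral_mono (by exact (integrable_const _).add (hri.const_mul t)) hexp ?_
  intro x
  have := Real.add_one_le_exp (t * r x)
  simp only
  linarith

lemma jensen_exp_indicator {α : Type*} [MeasurableSpace α] (γ : Measure α) [IsProbabilityMeasure γ]
    (U : Set α) (hU : MeasurableSet U) (r : α → ℝ) (hr : Measurable r)
    (c : ℝ≥0∞) (hc : 1 ≤ c)
    (hec : MemLp (U.indicator fun x => Real.exp (r x)) c γ)
    (hri : IntegrableOn r U γ) (hr0 : ∫ x in U, r x ∂γ = 0)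
    {s : ℝ} (hs0 : 0 ≤ s) (hs1 : s ≤ 1) :
    eLpNorm (U.indicator fun x => Real.exp (s * r x)) c γ
      ≤ eLpNorm (U.indicator fun x => Real.exp (r x)) c γ := by
  have hc0 : c ≠ 0 := by intro h; simp [h] at hc
  have hcvx : ∀ y : ℝ, Real.exp (s * y) ≤ s * Real.exp y + (1 - s) := by
    intro y
    have := convexOn_exp.2 (Set.mem_univ y) (Set.mem_univ 0) hs0
      (sub_nonneg.mpr hs1) (by ring : s + (1 - s) = 1)
    simpa using this
  by_cases hctop : c = ∞
  · -- essSup case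
    subst hctop
    by_cases hγU : γ U = 0
    · have hz : (U.indicator fun x => Real.exp (s * r x)) =ᵐ[γ] 0 := by
        filter_upwards [measure_eq_zero_iff_ae_notMem.1 hγU] with x hx
        simp [Set.indicator_of_notMem hx]
      rw [eLpNorm_congr_ae hz, eLpNorm_zero]
      simp
    · set C := eLpNorm (U.indicator fun x => Real.exp (r x)) ∞ γ with hCdef
      have hEi : IntegrableOn (fun x => Real.exp (1 * r x)) U γ := by
        have := hec.integrable le_top
        rw [integrable_indicator_iff hU] at this
        simpa [one_mul] using this
      have hC1 : (1 : ℝ≥0∞) ≤ C := by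
        by_contra hlt
        push_neg at hlt
        have hbd := ae_le_eLpNormEssSup (f := U.indicator fun x => Real.exp (r x)) (μ := γ)
        have hbd' : ∀ᵐ x ∂(γ.restrict U), Real.exp (r x) ≤ C.toReal := by
          rw [ae_restrict_iff' hU]
          filter_upwards [hbd] with x hx hxU
          rw [eLpNorm_exponent_top] at hCdef
          rw [← hCdef] at hx
          have : ‖(U.indicator fun x => Real.exp (r x)) x‖ₑ = ENNReal.ofReal (Real.exp (r x)) := by
            rw [Set.indicator_of_mem hxU]
            exact Real.enorm_eq_ofReal (Real.exp_pos _).le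
          rw [this] at hx
          have := ENNReal.toReal_mono (hlt.trans_le le_top).ne hx
          rwa [ENNReal.toReal_ofReal (Real.exp_pos _).le] at this
        have hlow := avg_lower γ U r hri hr0 (t := 1) hEi
        have hup : ∫ x in U, Real.exp (1 * r x) ∂γ ≤ C.toReal * (γ U).toReal := by
          have : ∫ x in U, Real.exp (1 * r x) ∂γ ≤ ∫ _x in U, C.toReal ∂γ := by
            refine integral_mono_ae (by have := hEi; simp only [one_mul] at this ⊢; exact this) (integrable_const _) ?_
            filter_upwards [hbd'] with x hx
            simpa [one_mul] using hx
          rw [setIntegral_const, smul_eq_mul, mul_comm (γ.real U)] at this; exact this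
        have hCR : C.toReal < 1 := by
          have := ENNReal.toReal_lt_toReal (hlt.trans_le le_top).ne (by simp : (1:ℝ≥0∞) ≠ ∞)
          simpa using this.mpr hlt
        have hγpos : 0 < (γ U).toReal := by
          refine ENNReal.toReal_pos hγU (by exact (measure_lt_top γ U).ne)
        nlinarith
      -- now bound essSup of E_s by C
      have hptw : ∀ᵐ x ∂γ, ‖(U.indicator fun x => Real.exp (s * r x)) x‖ₑ ≤ C := by
        filter_upwards [ae_le_eLpNormEssSup (f := U.indicator fun x => Real.exp (r x)) (μ := γ)] with x hx
        by_cases hxU : x ∈ U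
        · rw [Set.indicator_of_mem hxU, Real.enorm_eq_ofReal (Real.exp_pos _).le]
          rcases le_or_gt (r x) 0 with hrx | hrx
          · have : Real.exp (s * r x) ≤ 1 := by
              rw [← Real.exp_zero]
              exact Real.exp_le_exp.mpr (by nlinarith)
            calc ENNReal.ofReal (Real.exp (s * r x)) ≤ ENNReal.ofReal 1 := ENNReal.ofReal_le_ofReal this
            _ = 1 := by simp
            _ ≤ C := hC1
          · have h1 : Real.exp (s * r x) ≤ Real.exp (r x) :=
              Real.exp_le_exp.mpr (by nlinarith)
            calc ENNReal.ofReal (Real.exp (s * r x)) ≤ ENNReal.ofReal (Real.exp (r x)) :=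
                ENNReal.ofReal_le_ofReal h1
            _ = ‖(U.indicator fun x => Real.exp (r x)) x‖ₑ := by
                rw [Set.indicator_of_mem hxU, Real.enorm_eq_ofReal (Real.exp_pos _).le]
            _ ≤ _ := by
                rw [hCdef, eLpNorm_exponent_top]; exact hx
        · simp [Set.indicator_of_notMem hxU]
      rw [eLpNorm_exponent_top]
      exact essSup_le_of_ae_le _ hptw
  · -- finite exponent case
    set c' := c.toReal with hc'def
    have hc'pos : 0 < c' := ENNReal.toReal_pos hc0 hctop
    have hc'1 : 1 ≤ c' := by
      rw [hc'def, ← ENNReal.toReal_one]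
      exact ENNReal.toReal_mono hctop hc
    -- integrability of exp(c' * r) on U
    have hEc' : IntegrableOn (fun x => Real.exp (c' * r x)) U γ := by
      have h := hec.integrable_norm_rpow hc0 hctop
      have heq : (fun x => ‖(U.indicator fun x => Real.exp (r x)) x‖ ^ c') =
          U.indicator fun x => Real.exp (c' * r x) := by
        funext x
        by_cases hxU : x ∈ U
        · rw [Set.indicator_of_mem hxU, Set.indicator_of_mem hxU,
            Real.norm_eq_abs, abs_of_pos (Real.exp_pos _), ← Real.exp_mul, mul_comm]
        · rw [Set.indicator_of_notMem hxU, Set.indicator_of_notMem hxU]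
          simp [Real.zero_rpow hc'pos.ne']
      rw [heq, integrable_indicator_iff hU] at h
      exact h
    -- integrability of exp(c' * (s * r)) on U
    have hEs : IntegrableOn (fun x => Real.exp (c' * (s * r x))) U γ := by
      refine Integrable.mono' ((hEc'.const_mul s).add (integrable_const (1 - s))) ?_ ?_
      · exact ((hr.const_mul s).const_mul c').exp.aestronglyMeasurable.restrict
      · refine Filter.Eventually.of_forall fun x => ?_
        rw [Real.norm_eq_abs, abs_of_pos (Real.exp_pos _)]
        have := hcvx (c' * r x)
        calc Real.exp (c' * (s * r x)) = Real.exp (s * (c' * r x)) := by ring_nf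
        _ ≤ s * Real.exp (c' * r x) + (1 - s) := this
    -- the real inequality
    have hreal : ∫ x in U, Real.exp (c' * (s * r x)) ∂γ ≤ ∫ x in U, Real.exp (c' * r x) ∂γ := by
      have hlow := avg_lower γ U r hri hr0 (t := c') hEc'
      calc ∫ x in U, Real.exp (c' * (s * r x)) ∂γ
          ≤ ∫ x in U, (s * Real.exp (c' * r x) + (1 - s)) ∂γ := by
            refine integral_mono hEs ((hEc'.const_mul s).add (integrable_const _)) fun x => ?_
            have := hcvx (c' * r x)
            simp only
            calc Real.exp (c' * (s * r x)) = Real.exp (s * (c' * r x)) := by ring_nf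
            _ ≤ _ := this
        _ = s * (∫ x in U, Real.exp (c' * r x) ∂γ) + (1 - s) * (γ U).toReal := by
            rw [integral_add (hEc'.const_mul s) (integrable_const _), MeasureTheory.integral_const_mul,
              setIntegral_const, smul_eq_mul, measureReal_def]
            ring
        _ ≤ s * (∫ x in U, Real.exp (c' * r x) ∂γ) + (1 - s) * (∫ x in U, Real.exp (c' * r x) ∂γ) := by
            have h2 : 0 ≤ 1 - s := by linarith
            exact add_le_add le_rfl (mul_le_mul_of_nonneg_left hlow h2)
        _ = ∫ x in U, Real.exp (c' * r x) ∂γ := by ring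
    -- convert to eLpNorm
    have key : ∀ t : ℝ, IntegrableOn (fun x => Real.exp (c' * (t * r x))) U γ →
        eLpNorm (U.indicator fun x => Real.exp (t * r x)) c γ
          = (ENNReal.ofReal (∫ x in U, Real.exp (c' * (t * r x)) ∂γ)) ^ (1 / c') := by
      intro t hint
      rw [eLpNorm_eq_lintegral_rpow_enorm_toReal hc0 hctop]
      congr 1
      have hlin : ∫⁻ x, ‖(U.indicator fun x => Real.exp (t * r x)) x‖ₑ ^ c' ∂γ
          = ∫⁻ x, U.indicator (fun x => ENNReal.ofReal (Real.exp (c' * (t * r x)))) x ∂γ := by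
        refine lintegral_congr fun x => ?_
        by_cases hxU : x ∈ U
        · rw [Set.indicator_of_mem hxU, Set.indicator_of_mem hxU,
            Real.enorm_eq_ofReal (Real.exp_pos _).le,
            ENNReal.ofReal_rpow_of_pos (Real.exp_pos _), ← Real.exp_mul, mul_comm]
        · rw [Set.indicator_of_notMem hxU, Set.indicator_of_notMem hxU]
          simp [ENNReal.zero_rpow_of_pos hc'pos]
      rw [hlin, lintegral_indicator hU,
        ← ofReal_integral_eq_lintegral_ofReal hint
          (Filter.Eventually.of_forall fun x => (Real.exp_pos _).le)]
    have h1 : IntegrableOn (fun x => Real.exp (c' * ((1:ℝ) * r x))) U γ := by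
      simpa [one_mul] using hEc'
    have e1 : eLpNorm (U.indicator fun x => Real.exp ((1:ℝ) * r x)) c γ
        = eLpNorm (U.indicator fun x => Real.exp (r x)) c γ := by
      congr 1
      funext x
      simp [one_mul]
    rw [key s hEs, ← e1, key 1 h1]
    refine ENNReal.rpow_le_rpow (ENNReal.ofReal_le_ofReal ?_) (by positivity)
    simpa [one_mul] using hreal
lemma eLpNorm_pow_nat {α : Type*} [MeasurableSpace α] (γ : Measure α)
    (f : α → ℝ) (k : ℕ) (hk : k ≠ 0) (a : ℝ≥0∞) :
    eLpNorm (fun x => f x ^ k) a γ = eLpNorm f (a * k) γ ^ k := by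
  have hkpos : (0:ℝ) < k := by exact_mod_cast Nat.pos_of_ne_zero hk
  have h := eLpNorm_norm_rpow f (p := a) (q := (k:ℝ)) (μ := γ) hkpos
  have heq : (fun x => ‖f x‖ ^ (k:ℝ)) = fun x => ‖f x ^ k‖ := by
    funext x
    rw [Real.rpow_natCast, Real.norm_eq_abs, Real.norm_eq_abs, abs_pow]
  rw [heq, eLpNorm_norm, ENNReal.ofReal_natCast, ENNReal.rpow_natCast] at h
  exact h

lemma holder_three {α : Type*} [MeasurableSpace α] {γ : Measure α} {f1 f2 f3 : α → ℝ}
    (h1 : AEStronglyMeasurable f1 γ) (h2 : AEStronglyMeasurable f2 γ)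
    (h3 : AEStronglyMeasurable f3 γ)
    {a b c : ℝ≥0∞} (habc : 1 / a + 1 / b + 1 / c = 1) :
    eLpNorm (fun x => f1 x * f3 x * f2 x) 1 γ
      ≤ eLpNorm f1 a γ * eLpNorm f3 c γ * eLpNorm f2 b γ := by
  set d : ℝ≥0∞ := (1 / a + 1 / c)⁻¹ with hddef
  have hd : 1 / d = 1 / a + 1 / c := by
    rw [hddef, one_div, inv_inv]
  have h13 : eLpNorm (fun x => f1 x * f3 x) d γ ≤ eLpNorm f1 a γ * eLpNorm f3 c γ := by
    have := eLpNorm_smul_le_mul_eLpNorm (f := f3) (φ := f1) (μ := γ)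
      (p := a) (q := c) (r := d) h3 h1 (hpqr := ⟨by simpa [one_div] using hd.symm⟩)
    simpa [smul_eq_mul, Pi.mul_def] using this
  have h11 : (1:ℝ≥0∞) / 1 = 1 / d + 1 / b := by
    rw [hd, one_div_one,
      show (1:ℝ≥0∞)/a + 1/c + 1/b = 1/a + 1/b + 1/c from by ring, habc]
  have hfin := eLpNorm_smul_le_mul_eLpNorm (f := f2) (φ := fun x => f1 x * f3 x) (μ := γ)
    (p := d) (q := b) (r := 1) h2 (h1.mul h3) (hpqr := ⟨by simpa [one_div] using h11.symm⟩)
  calc eLpNorm (fun x => f1 x * f3 x * f2 x) 1 γ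
      = eLpNorm ((fun x => f1 x * f3 x) • f2) 1 γ := by
        apply eLpNorm_congr_ae
        exact Filter.Eventually.of_forall fun x => by simp [smul_eq_mul]
    _ ≤ eLpNorm (fun x => f1 x * f3 x) d γ * eLpNorm f2 b γ := hfin
    _ ≤ eLpNorm f1 a γ * eLpNorm f3 c γ * eLpNorm f2 b γ :=
        mul_le_mul_left h13 _

lemma memLp_mul_of_holder {α : Type*} [MeasurableSpace α] {γ : Measure α} {f1 f2 f3 : α → ℝ}
    {a b c : ℝ≥0∞} (habc : 1 / a + 1 / b + 1 / c = 1)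
    (h1 : MemLp f1 a γ) (h2 : MemLp f2 b γ) (h3 : MemLp f3 c γ) :
    MemLp (fun x => f1 x * f3 x * f2 x) 1 γ := by
  set d : ℝ≥0∞ := (1 / a + 1 / c)⁻¹ with hddef
  have hd : 1 / d = 1 / a + 1 / c := by rw [hddef, one_div, inv_inv]
  have h13 : MemLp (fun x => f1 x * f3 x) d γ := by
    have := h3.smul h1 (hpqr := ⟨by simpa [one_div] using hd.symm⟩)
    simpa [smul_eq_mul, Pi.mul_def] using this
  have h11 : (1:ℝ≥0∞) / 1 = 1 / d + 1 / b := by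
    rw [hd, one_div_one,
      show (1:ℝ≥0∞)/a + 1/c + 1/b = 1/a + 1/b + 1/c from by ring, habc]
  have := h2.smul h13 (r := 1) (hpqr := ⟨by simpa [one_div] using h11.symm⟩)
  simpa [smul_eq_mul, Pi.mul_def] using this


/-- Hölder-type bound for the Taylor remainder of the exponential under the integral:
if `1/a + 1/b + 1/c = 1`, `r·1_U ∈ L^{ak}(γ)`, `g ∈ L^b(γ)`, `e^r·1_U ∈ L^c(γ)` and
`∫_U r dγ = 0`, then
`|∫_U (e^r − ∑_{j<k} r^j/j!) g dγ| ≤ (1/k!) ‖r 1_U‖_{ak}^k ‖g‖_b ‖e^r 1_U‖_c`. -/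
theorem exp_taylor_remainder_holder_bound
    {α : Type*} [MeasurableSpace α] (γ : Measure α) [IsProbabilityMeasure γ]
    (U : Set α) (hU : MeasurableSet U)
    (r g : α → ℝ) (hr : Measurable r) (hg : Measurable g)
    (a b c : ℝ≥0∞) (ha : 1 ≤ a) (hb : 1 ≤ b) (hc : 1 ≤ c)
    (habc : 1 / a + 1 / b + 1 / c = 1)
    (k : ℕ)
    (hrk : MemLp (U.indicator r) (a * k) γ)
    (hgb : MemLp g b γ)
    (hec : MemLp (U.indicator fun x => Real.exp (r x)) c γ)
    (hr0 : ∫ x in U, r x ∂γ = 0) :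
    ENNReal.ofReal
        |∫ x in U,
            (Real.exp (r x) - ∑ j ∈ Finset.range k, (r x) ^ j / (Nat.factorial j)) * g x ∂γ|
      ≤ (Nat.factorial k : ℝ≥0∞)⁻¹ * (eLpNorm (U.indicator r) (a * k) γ) ^ k *
          eLpNorm g b γ * eLpNorm (U.indicator fun x => Real.exp (r x)) c γ := by
  classical
  rcases Nat.eq_zero_or_pos k with hk0 | hkpos
  · subst hk0
    simp only [Finset.range_zero, Finset.sum_empty, sub_zero, pow_zero, Nat.factorial_zero,
      Nat.cast_one, inv_one, one_mul]
    set E1 : α → ℝ := U.indicator fun x => Real.exp (r x) with hE1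
    have hind : (fun x => E1 x * g x) = U.indicator (fun x => Real.exp (r x) * g x) := by
      funext x
      by_cases hx : x ∈ U
      · simp [hE1, Set.indicator_of_mem hx]
      · simp [hE1, Set.indicator_of_notMem hx]
    have hbc1 : 1 / b + 1 / c ≤ 1 := by
      calc 1 / b + 1 / c ≤ 1 / a + 1 / b + 1 / c := by
            rw [add_assoc]; exact le_add_self
        _ = 1 := habc
    set d : ℝ≥0∞ := (1 / b + 1 / c)⁻¹ with hddef
    have hd : 1 / d = 1 / b + 1 / c := by rw [hddef, one_div, inv_inv]
    have h1d : (1:ℝ≥0∞) ≤ d := by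
      rw [hddef]
      exact ENNReal.one_le_inv.mpr hbc1
    have hEg : eLpNorm (fun x => E1 x * g x) d γ ≤ eLpNorm E1 c γ * eLpNorm g b γ := by
      have := eLpNorm_smul_le_mul_eLpNorm (f := g) (φ := E1) (p := c) (q := b) (r := d) (μ := γ)
        hgb.aestronglyMeasurable hec.aestronglyMeasurable (hpqr := ⟨by rw [← one_div, ← one_div, ← one_div, hd]; ring⟩)
      simpa [smul_eq_mul, Pi.mul_def] using this
    calc ENNReal.ofReal |∫ x in U, Real.exp (r x) * g x ∂γ|
        = ‖∫ x, U.indicator (fun x => Real.exp (r x) * g x) x ∂γ‖ₑ := by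
          rw [MeasureTheory.integral_indicator hU, ← ofReal_norm_eq_enorm, Real.norm_eq_abs]
      _ ≤ eLpNorm (U.indicator fun x => Real.exp (r x) * g x) 1 γ := by
          rw [eLpNorm_one_eq_lintegral_enorm]
          exact enorm_integral_le_lintegral_enorm _
      _ = eLpNorm (fun x => E1 x * g x) 1 γ := by rw [hind]
      _ ≤ eLpNorm (fun x => E1 x * g x) d γ :=
          eLpNorm_le_eLpNorm_of_exponent_le h1d (hec.aestronglyMeasurable.mul hgb.aestronglyMeasurable)
      _ ≤ eLpNorm E1 c γ * eLpNorm g b γ := hEg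
      _ = eLpNorm g b γ * eLpNorm E1 c γ := mul_comm _ _
  obtain ⟨n, rfl⟩ : ∃ n, k = n + 1 := ⟨k - 1, (Nat.succ_pred_eq_of_pos hkpos).symm⟩
  set A := eLpNorm (U.indicator r) (a * ((n+1 : ℕ) : ℝ≥0∞)) γ with hA
  set B := eLpNorm g b γ with hB
  set C := eLpNorm (U.indicator fun x => Real.exp (r x)) c γ with hC
  set N := A ^ (n+1) * B * C with hN
  have hAfin : A ≠ ∞ := hrk.eLpNorm_lt_top.ne
  have hBfin : B ≠ ∞ := hgb.eLpNorm_lt_top.ne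
  have hCfin : C ≠ ∞ := hec.eLpNorm_lt_top.ne
  have hNfin : N ≠ ∞ := by
    rw [hN]
    exact ENNReal.mul_ne_top (ENNReal.mul_ne_top (ENNReal.pow_ne_top hAfin) hBfin) hCfin
  have hk1 : (1:ℝ≥0∞) ≤ ((n+1 : ℕ) : ℝ≥0∞) := by
    exact_mod_cast Nat.one_le_cast.mpr (Nat.succ_le_succ (Nat.zero_le n))
  have h1ak : (1:ℝ≥0∞) ≤ a * ((n+1 : ℕ) : ℝ≥0∞) := by
    calc (1:ℝ≥0∞) = 1 * 1 := (one_mul 1).symm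
      _ ≤ a * ((n+1:ℕ):ℝ≥0∞) := mul_le_mul' ha hk1
  have hri : IntegrableOn r U γ := (integrable_indicator_iff hU).mp (hrk.integrable h1ak)
  set Rk : α → ℝ := fun x => (U.indicator r x) ^ (n+1) with hRk
  set Es : ℝ → α → ℝ := fun s => U.indicator (fun x => Real.exp (s * r x)) with hEs
  have hEsm : ∀ s : ℝ, AEStronglyMeasurable (Es s) γ := fun s =>
    (((hr.const_mul s).exp).indicator hU).aestronglyMeasurable
  have hRkm : AEStronglyMeasurable Rk γ := ((hr.indicator hU).pow_const (n+1)).aestronglyMeasurable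
  have hJ : ∀ s ∈ Set.Icc (0:ℝ) 1, eLpNorm (Es s) c γ ≤ C := fun s hs =>
    jensen_exp_indicator γ U hU r hr c hc hec hri hr0 hs.1 hs.2
  have hMemEs : ∀ s ∈ Set.Icc (0:ℝ) 1, MemLp (Es s) c γ := fun s hs =>
    ⟨hEsm s, lt_of_le_of_lt (hJ s hs) hec.eLpNorm_lt_top⟩
  have hMemRk : MemLp Rk a γ := by
    refine ⟨hRkm, ?_⟩
    rw [hRk, eLpNorm_pow_nat γ (U.indicator r) (n+1) (Nat.succ_ne_zero n) a]
    exact ENNReal.pow_lt_top hrk.eLpNorm_lt_top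
  set P : ℝ → α → ℝ := fun s x => Rk x * Es s x * g x with hP
  have hMemP : ∀ s ∈ Set.Icc (0:ℝ) 1, MemLp (P s) 1 γ := fun s hs =>
    memLp_mul_of_holder habc hMemRk hgb (hMemEs s hs)
  have hIntP : ∀ s ∈ Set.Icc (0:ℝ) 1, Integrable (P s) γ := fun s hs =>
    memLp_one_iff_integrable.mp (hMemP s hs)
  have hHold : ∀ s ∈ Set.Icc (0:ℝ) 1, eLpNorm (P s) 1 γ ≤ N := by
    intro s hs
    calc eLpNorm (P s) 1 γ ≤ eLpNorm Rk a γ * eLpNorm (Es s) c γ * eLpNorm g b γ :=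
        holder_three hRkm hgb.aestronglyMeasurable (hEsm s) habc
      _ ≤ eLpNorm Rk a γ * C * eLpNorm g b γ :=
        mul_le_mul_left (mul_le_mul_right (hJ s hs) _) _
      _ = A ^ (n+1) * C * B := by
        rw [hRk, eLpNorm_pow_nat γ (U.indicator r) (n+1) (Nat.succ_ne_zero n) a]
      _ = N := by rw [hN]; ring
  set Q : ℝ → α → ℝ := fun s x => (r x) ^ (n+1) * Real.exp (s * r x) * g x with hQ
  have hPind : ∀ s : ℝ, P s = U.indicator (Q s) := by
    intro s
    funext x
    by_cases hx : x ∈ U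
    · simp [hP, hRk, hEs, hQ, Set.indicator_of_mem hx]
    · simp [hP, hRk, hEs, hQ, Set.indicator_of_notMem hx]
  have hI1 : ∀ s ∈ Set.Icc (0:ℝ) 1, |∫ x in U, Q s x ∂γ| ≤ N.toReal := by
    intro s hs
    rw [← MeasureTheory.integral_indicator hU, ← hPind s, ← ENNReal.ofReal_le_iff_le_toReal hNfin]
    calc ENNReal.ofReal |∫ x, P s x ∂γ| = ‖∫ x, P s x ∂γ‖ₑ := by
          rw [← ofReal_norm_eq_enorm, Real.norm_eq_abs]
      _ ≤ ∫⁻ x, ‖P s x‖ₑ ∂γ := enorm_integral_le_lintegral_enorm _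
      _ = eLpNorm (P s) 1 γ := eLpNorm_one_eq_lintegral_enorm.symm
      _ ≤ N := hHold s hs
  have hI1norm : ∀ s ∈ Set.Icc (0:ℝ) 1, ∫ x in U, ‖Q s x‖ ∂γ ≤ N.toReal := by
    intro s hs
    have h1 : ∫ x in U, ‖Q s x‖ ∂γ = ∫ x, ‖P s x‖ ∂γ := by
      rw [← MeasureTheory.integral_indicator hU]
      congr 1
      funext x
      rw [hPind s]
      by_cases hx : x ∈ U
      · rw [Set.indicator_of_mem hx, Set.indicator_of_mem hx]
      · rw [Set.indicator_of_notMem hx, Set.indicator_of_notMem hx, norm_zero]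
    rw [h1, integral_norm_eq_lintegral_enorm (hMemP s hs).1]
    refine ENNReal.toReal_mono hNfin ?_
    rw [← eLpNorm_one_eq_lintegral_enorm]
    exact hHold s hs
  -- Fubini setup
  set w : ℝ → ℝ := fun s => (1 - s) ^ n / (Nat.factorial n : ℝ) with hw
  set F : ℝ → α → ℝ := fun s x => w s * Q s x with hF
  have hwnn : ∀ s ∈ Set.Icc (0:ℝ) 1, 0 ≤ w s := by
    intro s hs
    simp only [hw]
    have : (0:ℝ) ≤ 1 - s := by linarith [hs.2]
    positivity
  have hwle : ∀ s ∈ Set.Icc (0:ℝ) 1, w s ≤ (Nat.factorial n : ℝ)⁻¹ := by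
    intro s hs
    simp only [hw]
    rw [div_eq_mul_inv]
    have h1 : (1 - s) ^ n ≤ 1 := pow_le_one₀ (by linarith [hs.2]) (by linarith [hs.1])
    have h2 : (0:ℝ) ≤ ((Nat.factorial n : ℕ) : ℝ)⁻¹ := by positivity
    nlinarith
  have hQin : ∀ s ∈ Set.Icc (0:ℝ) 1, IntegrableOn (Q s) U γ := by
    intro s hs
    rw [← MeasureTheory.integrable_indicator_iff hU, ← hPind s]
    exact hIntP s hs
  have hFaesm : AEStronglyMeasurable (fun p : α × ℝ => F p.2 p.1)
      ((γ.restrict U).prod (volume.restrict (Set.Ioc (0:ℝ) 1))) := by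
    apply Measurable.aestronglyMeasurable
    simp only [hF, hQ, hw]
    have hm1 : Measurable fun p : α × ℝ => (1 - p.2) ^ n / (Nat.factorial n : ℝ) := by fun_prop
    have hm2 : Measurable fun p : α × ℝ => (r p.1) ^ (n+1) := by fun_prop
    have hm3 : Measurable fun p : α × ℝ => Real.exp (p.2 * r p.1) := by fun_prop
    have hm4 : Measurable fun p : α × ℝ => g p.1 := by fun_prop
    exact hm1.mul ((hm2.mul hm3).mul hm4)
  have hIntF : Integrable (fun p : α × ℝ => F p.2 p.1)
      ((γ.restrict U).prod (volume.restrict (Set.Ioc (0:ℝ) 1))) := by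
    rw [integrable_prod_iff' hFaesm]
    constructor
    · filter_upwards [ae_restrict_mem measurableSet_Ioc] with s hs
      exact ((hQin s ⟨hs.1.le, hs.2⟩).const_mul (w s))
    · refine Integrable.mono' (integrable_const ((Nat.factorial n : ℝ)⁻¹ * N.toReal))
        hFaesm.norm.prod_swap.integral_prod_right' ?_
      filter_upwards [ae_restrict_mem measurableSet_Ioc] with s hs
      have hs' : s ∈ Set.Icc (0:ℝ) 1 := ⟨hs.1.le, hs.2⟩
      have hcalc : ∫ x, ‖F s x‖ ∂(γ.restrict U) = w s * ∫ x, ‖Q s x‖ ∂(γ.restrict U) := by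
        rw [← MeasureTheory.integral_const_mul]
        apply MeasureTheory.integral_congr_ae
        refine Filter.Eventually.of_forall fun x => ?_
        simp only [hF]
        rw [norm_mul, Real.norm_eq_abs (w s), abs_of_nonneg (hwnn s hs')]
      rw [Real.norm_eq_abs, abs_of_nonneg (by
        rw [hcalc]
        exact mul_nonneg (hwnn s hs') (integral_nonneg fun x => norm_nonneg _)), hcalc]
      exact mul_le_mul (hwle s hs') (hI1norm s hs')
        (integral_nonneg fun x => norm_nonneg _) (by positivity)
  have hswap := integral_integral_swap (f := fun (x : α) (s : ℝ) => F s x) hIntF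
  have hinner : ∀ x : α,
      (Real.exp (r x) - ∑ j ∈ Finset.range (n+1), (r x) ^ j / (Nat.factorial j)) * g x
        = ∫ s in Set.Ioc (0:ℝ) 1, F s x := by
    intro x
    rw [exp_taylor_int n (r x), intervalIntegral.integral_of_le zero_le_one, ← MeasureTheory.integral_mul_const]
    apply MeasureTheory.integral_congr_ae
    refine Filter.Eventually.of_forall fun s => ?_
    simp only [hF, hQ, hw]
    ring
  have hLHS : ∫ x in U,
      (Real.exp (r x) - ∑ j ∈ Finset.range (n+1), (r x) ^ j / (Nat.factorial j)) * g x ∂γ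
      = ∫ s in Set.Ioc (0:ℝ) 1, ∫ x, F s x ∂(γ.restrict U) := by
    rw [← hswap]
    apply MeasureTheory.integral_congr_ae
    exact Filter.Eventually.of_forall fun x => hinner x
  have hIs : ∀ s ∈ Set.Icc (0:ℝ) 1, |∫ x, F s x ∂(γ.restrict U)| ≤ w s * N.toReal := by
    intro s hs
    have heq : ∫ x, F s x ∂(γ.restrict U) = w s * ∫ x, Q s x ∂(γ.restrict U) :=
      MeasureTheory.integral_const_mul _ _
    rw [heq, abs_mul, abs_of_nonneg (hwnn s hs)]
    exact mul_le_mul_of_nonneg_left (hI1 s hs) (hwnn s hs)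
  have hIntInner : Integrable (fun s => ∫ x, F s x ∂(γ.restrict U))
      (volume.restrict (Set.Ioc (0:ℝ) 1)) := hIntF.integral_prod_right
  have hIntW : Integrable (fun s => w s * N.toReal) (volume.restrict (Set.Ioc (0:ℝ) 1)) := by
    have : Continuous fun s : ℝ => w s * N.toReal := by
      rw [hw]; fun_prop
    exact this.integrableOn_Ioc
  have hwint : ∫ s in Set.Ioc (0:ℝ) 1, w s = ((Nat.factorial (n+1) : ℕ) : ℝ)⁻¹ := by
    rw [← intervalIntegral.integral_of_le zero_le_one, hw, intervalIntegral.integral_div]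
    rw [show (fun s : ℝ => (1 - s) ^ n) = (fun s : ℝ => (fun u : ℝ => u ^ n) (1 - s)) from rfl]
    rw [intervalIntegral.integral_comp_sub_left (fun u : ℝ => u ^ n) 1]
    norm_num [integral_pow]
    rw [Nat.factorial_succ]
    have h1 : ((n:ℝ) + 1) ≠ 0 := by positivity
    have h2 : ((Nat.factorial n : ℕ) : ℝ) ≠ 0 := by exact_mod_cast Nat.factorial_ne_zero n
    push_cast
    field_simp
  have habs : |∫ s in Set.Ioc (0:ℝ) 1, ∫ x, F s x ∂(γ.restrict U)|
      ≤ N.toReal * ((Nat.factorial (n+1) : ℕ) : ℝ)⁻¹ := by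
    calc |∫ s in Set.Ioc (0:ℝ) 1, ∫ x, F s x ∂(γ.restrict U)|
        ≤ ∫ s in Set.Ioc (0:ℝ) 1, |∫ x, F s x ∂(γ.restrict U)| := by
          simpa [Real.norm_eq_abs] using
            norm_integral_le_integral_norm (μ := volume.restrict (Set.Ioc (0:ℝ) 1))
              (fun s => ∫ x, F s x ∂(γ.restrict U))
      _ ≤ ∫ s in Set.Ioc (0:ℝ) 1, w s * N.toReal := by
          refine MeasureTheory.integral_mono_ae hIntInner.abs hIntW ?_
          filter_upwards [ae_restrict_mem measurableSet_Ioc] with s hs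
          exact hIs s ⟨hs.1.le, hs.2⟩
      _ = (∫ s in Set.Ioc (0:ℝ) 1, w s) * N.toReal := MeasureTheory.integral_mul_const _ _
      _ = N.toReal * ((Nat.factorial (n+1) : ℕ) : ℝ)⁻¹ := by rw [hwint]; ring
  rw [hLHS]
  calc ENNReal.ofReal |∫ s in Set.Ioc (0:ℝ) 1, ∫ x, F s x ∂(γ.restrict U)|
      ≤ ENNReal.ofReal (N.toReal * ((Nat.factorial (n+1) : ℕ) : ℝ)⁻¹) :=
        ENNReal.ofReal_le_ofReal habs
    _ = N * ((Nat.factorial (n+1) : ℕ) : ℝ≥0∞)⁻¹ := by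
        rw [ENNReal.ofReal_mul ENNReal.toReal_nonneg, ENNReal.ofReal_toReal hNfin]
        congr 1
        rw [ENNReal.ofReal_inv_of_pos
          (by positivity : (0:ℝ) < ((Nat.factorial (n+1) : ℕ) : ℝ)), ENNReal.ofReal_natCast]
    _ = ((Nat.factorial (n+1) : ℕ) : ℝ≥0∞)⁻¹ * A ^ (n+1) * B * C := by rw [hN]; ring
end

section
/- Let p = (p_0,...,p_d) be a pmf with p_min := min_j p_j ≤ 1/3 and p_min > 0. Let v̄(θ) = −Σ_j p_j log θ_j on the positive orthant. Then the operator norm of ∇³v̄ at p, weighted by the Hessian ∇²v̄(p) and restricted to the subspace {u : Σ_j u_j = 0}, equals 2(1 − 2p_min)/√(p_min(1 − p_min)). That is, sup{ −2 Σ_j u_j³/p_j² : Σ_j u_j = 0, Σ_j u_j²/p_j = 1 } = 2(1 − 2p_min)/√(p_min(1 − p_min)). -/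
open scoped BigOperators

private lemma aux_neg_le (x c : ℝ) (hc : 0 < c) (hx : x ^ 2 ≤ c ^ 2) : -c ≤ x := by
  nlinarith [sq_nonneg (x + c)]

private lemma aux_cs (P U : ℝ) (hP : 0 < P) (h : U ^ 2 ≤ (1 - P) * (1 - U ^ 2 / P)) :
    U ^ 2 ≤ P * (1 - P) := by
  have h1 : U ^ 2 / P * P = U ^ 2 := div_mul_cancel₀ _ hP.ne'
  have h2 : U ^ 2 / P + P ≤ 1 := by nlinarith [h, h1]
  calc U ^ 2 = U ^ 2 / P * P := h1.symm
    _ ≤ (1 - P) * P := mul_le_mul_of_nonneg_right (by linarith) hP.le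
    _ = P * (1 - P) := by ring

private lemma aux_mono (P q U : ℝ) (hq : 0 < q) (hP : q ≤ P) (hP1 : 0 < P)
    (h : U ^ 2 ≤ P * (1 - P)) : U ^ 2 * q ≤ (1 - q) * P ^ 2 := by
  nlinarith [mul_le_mul_of_nonneg_right h hq.le, mul_nonneg hP1.le (sub_nonneg.2 hP)]

private lemma aux_mem2 (q R : ℝ) (hq : q ≠ 0) (hR : R ≠ 0) (h : R ^ 2 = q * (1 - q)) :
    (-((1 - q) * q / R)) ^ 2 / q + q ^ 2 / R ^ 2 * (1 - q) = 1 := by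
  calc (-((1 - q) * q / R)) ^ 2 / q + q ^ 2 / R ^ 2 * (1 - q) = q * (1 - q) / R ^ 2 := by
        field_simp; ring
    _ = 1 := by rw [← h]; exact div_self (pow_ne_zero 2 hR)

private lemma aux_mem3 (q R : ℝ) (hq : q ≠ 0) (hR : R ≠ 0) (h : R ^ 2 = q * (1 - q)) :
    2 * (1 - 2 * q) / R = -2 * ((-((1 - q) * q / R)) ^ 3 / q ^ 2 + q ^ 3 / R ^ 3 * (1 - q)) := by
  calc 2 * (1 - 2 * q) / R = 2 * (1 - 2 * q) * (q * (1 - q)) / R ^ 3 := by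
        rw [← h]; field_simp
    _ = -2 * ((-((1 - q) * q / R)) ^ 3 / q ^ 2 + q ^ 3 / R ^ 3 * (1 - q)) := by
        field_simp; ring

private lemma aux_hid (a b u P : ℝ) (hP : P ≠ 0) :
    u ^ 3 / P ^ 2 - ((a + 2 * b) * u ^ 2 / P - (b ^ 2 + 2 * a * b) * u + a * b ^ 2 * P)
      = (u - a * P) * (u - b * P) ^ 2 / P ^ 2 := by
  field_simp
  ring

/-- For a pmf `p` with `p_min ≤ 1/3`, the weighted operator norm of the third
derivative of `v̄(θ) = −∑ p_j log θ_j` at `p`, restricted to the simplex tangent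
space, equals `2(1 − 2 p_min)/√(p_min(1 − p_min))`:
`sup{ −2 ∑_j u_j³/p_j² : ∑_j u_j = 0, ∑_j u_j²/p_j = 1 } = 2(1−2p_min)/√(p_min(1−p_min))`. -/
theorem dirichlet_third_derivative_opNorm
    (d : ℕ) (p : Fin (d + 1) → ℝ) (hp : ∀ j, 0 < p j) (hsum : ∑ j, p j = 1)
    (pmin : ℝ) (hpmin : IsLeast (Set.range p) pmin) (hpm : pmin ≤ 1 / 3) :
    sSup {y : ℝ | ∃ u : Fin (d + 1) → ℝ,
        (∑ j, u j = 0) ∧ (∑ j, (u j) ^ 2 / p j = 1) ∧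
        y = -2 * ∑ j, (u j) ^ 3 / (p j) ^ 2}
      = 2 * (1 - 2 * pmin) / Real.sqrt (pmin * (1 - pmin)) := by
  classical
  obtain ⟨⟨j₀, hj₀⟩, hlb⟩ := hpmin
  have hq0 : 0 < pmin := hj₀ ▸ hp j₀
  have hq1 : pmin < 1 := lt_of_le_of_lt hpm (by norm_num)
  have hple : ∀ j, pmin ≤ p j := fun j => hlb ⟨j, rfl⟩
  set sq : ℝ := Real.sqrt pmin with hsqdef
  set s1 : ℝ := Real.sqrt (1 - pmin) with hs1def
  have hsq : 0 < sq := Real.sqrt_pos.2 hq0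
  have hs1 : 0 < s1 := Real.sqrt_pos.2 (by linarith)
  have hsq2 : sq ^ 2 = pmin := Real.sq_sqrt hq0.le
  have hs12 : s1 ^ 2 = 1 - pmin := Real.sq_sqrt (by linarith)
  have hroot : Real.sqrt (pmin * (1 - pmin)) = sq * s1 := Real.sqrt_mul hq0.le _
  clear_value sq s1
  set r : ℝ := sq * s1 with hrdef
  have hr : 0 < r := mul_pos hsq hs1
  have hr2 : r ^ 2 = pmin * (1 - pmin) := by rw [hrdef, mul_pow, hsq2, hs12]
  clear_value r
  -- complement sum of p
  have hperase : ∑ k ∈ Finset.univ.erase j₀, p k = 1 - pmin := by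
    have h := Finset.add_sum_erase Finset.univ p (Finset.mem_univ j₀)
    rw [hsum, hj₀] at h
    linarith
  apply IsGreatest.csSup_eq
  constructor
  · -- membership: the two-block vector attains the value
    refine ⟨fun j => if j = j₀ then -((1 - pmin) * pmin / r) else pmin * p j / r, ?_, ?_, ?_⟩
    · rw [← Finset.add_sum_erase Finset.univ _ (Finset.mem_univ j₀)]
      rw [if_pos rfl]
      rw [Finset.sum_congr rfl (fun k hk => by
        rw [if_neg (Finset.mem_erase.1 hk).1])]
      rw [← Finset.sum_div, ← Finset.mul_sum, hperase]
      ring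
    · rw [← Finset.add_sum_erase Finset.univ _ (Finset.mem_univ j₀)]
      beta_reduce
      rw [if_pos rfl, hj₀]
      rw [Finset.sum_congr rfl (fun k hk => by
        rw [if_neg (Finset.mem_erase.1 hk).1])]
      have hs2 : ∑ k ∈ Finset.univ.erase j₀, (pmin * p k / r) ^ 2 / p k
          = pmin ^ 2 / r ^ 2 * (1 - pmin) := by
        rw [← hperase, Finset.mul_sum]
        refine Finset.sum_congr rfl fun k hk => ?_
        have hk0 := (hp k).ne'
        field_simp
      rw [hs2]
      exact aux_mem2 pmin r hq0.ne' hr.ne' hr2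
    · rw [← Finset.add_sum_erase Finset.univ _ (Finset.mem_univ j₀)]
      beta_reduce
      rw [if_pos rfl, hj₀]
      rw [Finset.sum_congr rfl (fun k hk => by
        rw [if_neg (Finset.mem_erase.1 hk).1])]
      have hs3 : ∑ k ∈ Finset.univ.erase j₀, (pmin * p k / r) ^ 3 / (p k) ^ 2
          = pmin ^ 3 / r ^ 3 * (1 - pmin) := by
        rw [← hperase, Finset.mul_sum]
        refine Finset.sum_congr rfl fun k hk => ?_
        have hk0 := (hp k).ne'
        field_simp
      rw [hs3, hroot]
      exact aux_mem3 pmin r hq0.ne' hr.ne' hr2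
  · -- upper bound
    rintro y ⟨u, hu0, hu2, rfl⟩
    set a : ℝ := -(s1 / sq) with hadef
    set b : ℝ := sq / s1 with hbdef
    clear_value a b
    -- each u j ≥ a * p j
    have key : ∀ j, a * p j ≤ u j := by
      intro j
      -- Cauchy-Schwarz on the complement
      have hTu : ∑ k ∈ Finset.univ.erase j, u k = -u j := by
        have h := Finset.add_sum_erase Finset.univ u (Finset.mem_univ j)
        rw [hu0] at h; linarith
      have hTp : ∑ k ∈ Finset.univ.erase j, p k = 1 - p j := by
        have h := Finset.add_sum_erase Finset.univ p (Finset.mem_univ j)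
        rw [hsum] at h; linarith
      have hT2 : ∑ k ∈ Finset.univ.erase j, (u k) ^ 2 / p k = 1 - (u j) ^ 2 / p j := by
        have h := Finset.add_sum_erase Finset.univ (fun k => (u k) ^ 2 / p k)
          (Finset.mem_univ j)
        rw [hu2] at h
        linarith
      have hcs := Finset.sum_mul_sq_le_sq_mul_sq (Finset.univ.erase j)
        (fun k => Real.sqrt (p k)) (fun k => u k / Real.sqrt (p k))
      have h1 : ∀ k, Real.sqrt (p k) * (u k / Real.sqrt (p k)) = u k := by
        intro k
        rw [mul_div_cancel₀]
        exact (Real.sqrt_pos.2 (hp k)).ne'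
      have h2 : ∀ k, (Real.sqrt (p k)) ^ 2 = p k := fun k => Real.sq_sqrt (hp k).le
      have h3 : ∀ k, (u k / Real.sqrt (p k)) ^ 2 = (u k) ^ 2 / p k := by
        intro k
        rw [div_pow, h2]
      simp only [h1, h2, h3] at hcs
      rw [hTu, hTp, hT2] at hcs
      have hpj := hp j
      have husq : (u j) ^ 2 ≤ p j * (1 - p j) := by
        apply aux_cs _ _ hpj
        calc (u j) ^ 2 = (-u j) ^ 2 := by ring
          _ ≤ (1 - p j) * (1 - (u j) ^ 2 / p j) := hcs
      -- now u j ^ 2 ≤ (s1 * p j / sq)^2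
      have hsqlt : (u j) ^ 2 ≤ (s1 * p j / sq) ^ 2 := by
        have h4 : (s1 * p j / sq) ^ 2 = (1 - pmin) * (p j) ^ 2 / pmin := by
          rw [div_pow, mul_pow, hs12, hsq2]
        rw [h4, le_div_iff₀ hq0]
        exact aux_mono (p j) pmin (u j) hq0 (hple j) hpj husq
      have hneg : -(s1 * p j / sq) ≤ u j :=
        aux_neg_le _ _ (by positivity) hsqlt
      calc a * p j = -(s1 * p j / sq) := by rw [hadef]; ring
        _ ≤ u j := hneg
    -- per-coordinate cubic inequality
    have hterm : ∀ j, (a + 2 * b) * (u j) ^ 2 / p j - (b ^ 2 + 2 * a * b) * u j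
        + a * b ^ 2 * p j ≤ (u j) ^ 3 / (p j) ^ 2 := by
      intro j
      have hpj := hp j
      have hid := aux_hid a b (u j) (p j) hpj.ne'
      have hpos : 0 ≤ (u j - a * p j) * (u j - b * p j) ^ 2 / (p j) ^ 2 := by
        apply div_nonneg _ (by positivity)
        exact mul_nonneg (by linarith [key j]) (sq_nonneg _)
      linarith [hpos, hid.ge, hid.le]
    have hsumle : (a + 2 * b) + a * b ^ 2 ≤ ∑ j, (u j) ^ 3 / (p j) ^ 2 := by
      calc (a + 2 * b) + a * b ^ 2
          = (a + 2 * b) * (∑ j, (u j) ^ 2 / p j) - (b ^ 2 + 2 * a * b) * (∑ j, u j)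
            + a * b ^ 2 * (∑ j, p j) := by rw [hu2, hu0, hsum]; ring
        _ = ∑ j, ((a + 2 * b) * (u j) ^ 2 / p j - (b ^ 2 + 2 * a * b) * u j
            + a * b ^ 2 * p j) := by
            rw [Finset.mul_sum, Finset.mul_sum, Finset.mul_sum,
              ← Finset.sum_sub_distrib, ← Finset.sum_add_distrib]
            exact Finset.sum_congr rfl fun j _ => by ring
        _ ≤ ∑ j, (u j) ^ 3 / (p j) ^ 2 := Finset.sum_le_sum fun j _ => hterm j
    have hval : (a + 2 * b) + a * b ^ 2 = (2 * pmin - 1) / r := by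
      rw [hadef, hbdef, hrdef]
      have h : (2 * pmin - 1 : ℝ) = sq ^ 2 - s1 ^ 2 := by linarith
      rw [h]
      field_simp
      ring
    rw [hroot]
    rw [hval] at hsumle
    have heq : 2 * (1 - 2 * pmin) / r = -2 * ((2 * pmin - 1) / r) := by
      ring
    rw [heq]
    linarith [hsumle]
end

section
/- Let Z ∼ N(0, I_d), let θ = p + n^{−1/2}(diag(p) − pp^T)^{1/2} Z' be a Gaussian vector with mean pmf p and covariance n^{−1}(diag(p) − pp^T) (the degenerate Gaussian Laplace approximation for the Dirichlet), and define S(θ) = (n/3) Σ_{j=0}^d (θ_j − p_j)³/p_j². Then E[S(θ)²] = (5/3) χ²(Unif_{d+1}‖p) (d+1)²/n + (2/3)(d² − d)/n. -/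
open MeasureTheory ProbabilityTheory Matrix
open scoped BigOperators

/-- The standard Gaussian measure on `ℝ^m` (product of standard 1-d Gaussians). -/
noncomputable def stdGaussianPi (m : ℕ) : Measure (Fin m → ℝ) :=
  Measure.pi fun _ => gaussianReal 0 1

instance (m : ℕ) : IsProbabilityMeasure (stdGaussianPi m) := by
  unfold stdGaussianPi; infer_instance

namespace DSSM

open Real Filter Set
open scoped ENNReal NNReal

lemma intJ (k : ℕ) : Integrable (fun x : ℝ => x ^ k * rexp (-(2⁻¹) * x ^ 2)) := by
  have h := integrable_rpow_mul_exp_neg_mul_sq (b := 2⁻¹) (by norm_num)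
    (s := (k : ℝ)) (neg_one_lt_zero.trans_le (Nat.cast_nonneg k))
  simpa [Real.rpow_natCast] using h

noncomputable def J (k : ℕ) : ℝ := ∫ x : ℝ, x ^ k * rexp (-(2⁻¹) * x ^ 2)

lemma J_zero : J 0 = √(2 * π) := by
  have h := integral_gaussian 2⁻¹
  simp only [J, pow_zero, one_mul]
  rw [h, show π / 2⁻¹ = 2 * π by ring]

lemma J_odd (k : ℕ) (hk : Odd k) : J k = 0 := by
  have h := integral_neg_eq_self (fun x : ℝ => x ^ k * rexp (-(2⁻¹) * x ^ 2)) volume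
  have h2 : ∀ x : ℝ, (-x) ^ k * rexp (-(2⁻¹) * (-x) ^ 2)
      = -(x ^ k * rexp (-(2⁻¹) * x ^ 2)) := by
    intro x
    rw [hk.neg_pow, neg_sq]
    ring
  simp only [h2] at h
  rw [integral_neg] at h
  have : J k = - J k := h.symm
  linarith

lemma J_rec (k : ℕ) : J (k + 2) = (k + 1) * J k := by
  set f : ℝ → ℝ := fun x => x ^ (k + 1) * rexp (-(2⁻¹) * x ^ 2) with hf
  set f' : ℝ → ℝ := fun x =>
    ((k : ℝ) + 1) * (x ^ k * rexp (-(2⁻¹) * x ^ 2)) - x ^ (k + 2) * rexp (-(2⁻¹) * x ^ 2)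
    with hf'
  have hder : ∀ x : ℝ, HasDerivAt f (f' x) x := by
    intro x
    have h1 : HasDerivAt (fun x : ℝ => x ^ (k + 1)) (((k : ℝ) + 1) * x ^ k) x := by
      simpa using hasDerivAt_pow (k + 1) x
    have h2 : HasDerivAt (fun x : ℝ => -(2⁻¹) * x ^ 2) (-(2⁻¹) * (2 * x)) x := by
      simpa using (hasDerivAt_pow 2 x).const_mul (-(2⁻¹ : ℝ))
    have h3 := h2.exp
    have h4 := h1.mul h3
    refine h4.congr_deriv ?_
    simp only [hf']
    ring
  have hint_f : Integrable f := intJ (k + 1)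
  have hint_f' : Integrable f' := (((intJ k).const_mul _).sub (intJ (k + 2)))
  have htop : Tendsto f atTop (nhds 0) :=
    tendsto_zero_of_hasDerivAt_of_integrableOn_Ioi (a := 0)
      (fun x _ => hder x) hint_f'.integrableOn hint_f.integrableOn
  have hbot : Tendsto f atBot (nhds 0) :=
    tendsto_zero_of_hasDerivAt_of_integrableOn_Iic (a := 0)
      (fun x _ => hder x) hint_f'.integrableOn hint_f.integrableOn
  have hIoi : ∫ x in Ioi (0:ℝ), f' x = 0 - f 0 :=
    integral_Ioi_of_hasDerivAt_of_tendsto' (fun x _ => hder x) hint_f'.integrableOn htop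
  have hIic : ∫ x in Iic (0:ℝ), f' x = f 0 - 0 :=
    integral_Iic_of_hasDerivAt_of_tendsto' (fun x _ => hder x) hint_f'.integrableOn hbot
  have hsplit : (∫ x in Iic (0:ℝ), f' x) + ∫ x in Ioi (0:ℝ), f' x = ∫ x : ℝ, f' x :=
    intervalIntegral.integral_Iic_add_Ioi hint_f'.integrableOn hint_f'.integrableOn
  have hzero : ∫ x : ℝ, f' x = 0 := by
    rw [← hsplit, hIoi, hIic]; ring
  have hexp : ∫ x : ℝ, f' x = ((k : ℝ) + 1) * J k - J (k + 2) := by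
    rw [hf']
    rw [integral_sub ((intJ k).const_mul _) (intJ (k + 2)), integral_const_mul]
    rfl
  rw [hexp] at hzero
  linarith

/-- moments of the standard Gaussian. -/
noncomputable def G (k : ℕ) : ℝ := ∫ x : ℝ, x ^ k ∂(gaussianReal 0 1)

lemma integral_gaussianReal_eq (g : ℝ → ℝ) :
    ∫ x, g x ∂(gaussianReal 0 1) = (√(2 * π))⁻¹ * ∫ x : ℝ, g x * rexp (-(2⁻¹) * x ^ 2) := by
  rw [gaussianReal_of_var_ne_zero 0 one_ne_zero]
  have hd : gaussianPDF 0 1 = fun x => ((gaussianPDFReal 0 1 x).toNNReal : ℝ≥0∞) := by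
    funext x; rfl
  rw [hd, integral_withDensity_eq_integral_smul
    ((measurable_gaussianPDFReal 0 1).real_toNNReal)]
  rw [← integral_const_mul]
  congr 1
  funext x
  have hnn := gaussianPDFReal_nonneg 0 1 x
  simp only [NNReal.smul_def, Real.coe_toNNReal _ hnn, smul_eq_mul]
  rw [gaussianPDFReal]
  push_cast
  rw [mul_one]
  have : -(x - 0) ^ 2 / (2 * 1) = -(2⁻¹) * x ^ 2 := by ring
  rw [this]
  ring

lemma integrable_pow_gaussianReal (k : ℕ) :
    Integrable (fun x : ℝ => x ^ k) (gaussianReal 0 1) := by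
  rw [gaussianReal_of_var_ne_zero 0 one_ne_zero]
  have hd : gaussianPDF 0 1 = fun x => ((gaussianPDFReal 0 1 x).toNNReal : ℝ≥0∞) := by
    funext x; rfl
  rw [hd, integrable_withDensity_iff_integrable_coe_smul
    ((measurable_gaussianPDFReal 0 1).real_toNNReal)]
  have : ∀ x : ℝ, ((gaussianPDFReal 0 1 x).toNNReal : ℝ) • (x ^ k)
      = (√(2 * π))⁻¹ * (x ^ k * rexp (-(2⁻¹) * x ^ 2)) := by
    intro x
    have hnn := gaussianPDFReal_nonneg 0 1 x
    simp only [smul_eq_mul, Real.coe_toNNReal _ hnn]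
    rw [gaussianPDFReal]
    push_cast
    rw [mul_one]
    have : -(x - 0) ^ 2 / (2 * 1) = -(2⁻¹) * x ^ 2 := by ring
    rw [this]
    ring
  simp only [this]
  exact (intJ k).const_mul _

lemma G_eq (k : ℕ) : G k = (√(2 * π))⁻¹ * J k := integral_gaussianReal_eq _

lemma sqrt_two_pi_pos : (0:ℝ) < √(2 * π) := Real.sqrt_pos.mpr (by positivity)

lemma G_zero : G 0 = 1 := by
  rw [G_eq, J_zero, inv_mul_cancel₀ sqrt_two_pi_pos.ne']

lemma G_one : G 1 = 0 := by rw [G_eq, J_odd 1 (by decide)]; ring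
lemma G_three : G 3 = 0 := by rw [G_eq, J_odd 3 (by decide)]; ring
lemma G_five : G 5 = 0 := by rw [G_eq, J_odd 5 (by decide)]; ring

lemma G_two : G 2 = 1 := by
  have h := J_rec 0
  rw [G_eq]
  rw [show (2:ℕ) = 0 + 2 by rfl, h, J_zero]
  rw [inv_mul_eq_div]
  field_simp
  norm_num

lemma G_four : G 4 = 3 := by
  have h2 := J_rec 2
  have h0 := J_rec 0
  rw [G_eq, show (4:ℕ) = 2 + 2 by rfl, h2, (h0 : J 2 = (((0:ℕ):ℝ) + 1) * J 0), J_zero]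
  have := sqrt_two_pi_pos
  field_simp
  ring

lemma G_six : G 6 = 15 := by
  have h4 := J_rec 4
  have h2 := J_rec 2
  have h0 := J_rec 0
  rw [G_eq, show (6:ℕ) = 4 + 2 by rfl, h4, (h2 : J 4 = (((2:ℕ):ℝ) + 1) * J 2),
    (h0 : J 2 = (((0:ℕ):ℝ) + 1) * J 0), J_zero]
  have := sqrt_two_pi_pos
  field_simp
  ring


lemma G_def (k : ℕ) : G k = ∫ x : ℝ, x ^ k ∂(gaussianReal 0 1) := rfl

def mom : ℕ → ℕ → ℝ → ℝ → ℝ → ℝ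
  | 0, 0, _, _, _ => 1
  | 1, 1, _, _, s => s
  | 2, 0, a, _, _ => a
  | 0, 2, _, b, _ => b
  | 2, 2, a, b, s => a * b + 2 * s ^ 2
  | 3, 1, a, _, s => 3 * a * s
  | 1, 3, _, b, s => 3 * b * s
  | 3, 3, a, b, s => 9 * a * b * s + 6 * s ^ 3
  | _, _, _, _, _ => 0

set_option maxHeartbeats 1000000 in
lemma momrec (i j : ℕ) (hi : i ≤ 3) (hj : j ≤ 3) (a0 b0 α β s : ℝ) :
    ∑ r ∈ Finset.range (i + 1), ∑ q ∈ Finset.range (j + 1),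
      (a0 ^ r * b0 ^ q * (Nat.choose i r) * (Nat.choose j q)) * G (r + q)
        * mom (i - r) (j - q) α β s
    = mom i j (α + a0 * a0) (β + b0 * b0) (s + a0 * b0) := by
  interval_cases i <;> interval_cases j <;>
    · simp only [Finset.sum_range_succ, Finset.sum_range_zero]
      norm_num [mom, G_zero, G_one, G_two, G_three, G_four, G_five, G_six]
      try ring


theorem key : ∀ (m : ℕ) (a b : Fin m → ℝ) (i j : ℕ), i ≤ 3 → j ≤ 3 →
    Integrable (fun z => (∑ k, a k * z k) ^ i * (∑ k, b k * z k) ^ j) (stdGaussianPi m) ∧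
    ∫ z, (∑ k, a k * z k) ^ i * (∑ k, b k * z k) ^ j ∂(stdGaussianPi m)
      = mom i j (∑ k, a k * a k) (∑ k, b k * b k) (∑ k, a k * b k) := by
  intro m
  induction m with
  | zero =>
    intro a b i j hi hj
    simp only [Finset.univ_eq_empty, Finset.sum_empty]
    constructor
    · exact integrable_const _
    · rw [integral_const, probReal_univ]
      simp only [ENNReal.toReal_one, one_smul]
      interval_cases i <;> interval_cases j <;> norm_num [mom]
  | succ m IH =>
    intro a b i j hi hj
    set e := MeasurableEquiv.piFinSuccAbove (fun _ : Fin (m + 1) => ℝ) 0 with he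
    have hMP : MeasurePreserving e (stdGaussianPi (m + 1))
        ((gaussianReal 0 1).prod (stdGaussianPi m)) :=
      measurePreserving_piFinSuccAbove (fun _ : Fin (m + 1) => gaussianReal 0 1) 0
    set Sa : (Fin m → ℝ) → ℝ := fun w => ∑ k, a k.succ * w k with hSa
    set Sb : (Fin m → ℝ) → ℝ := fun w => ∑ k, b k.succ * w k with hSb
    set G2 : ℝ × (Fin m → ℝ) → ℝ :=
      fun q => (a 0 * q.1 + Sa q.2) ^ i * (b 0 * q.1 + Sb q.2) ^ j with hG2
    have hcomp : ∀ x : Fin (m + 1) → ℝ,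
        (∑ k, a k * x k) ^ i * (∑ k, b k * x k) ^ j = G2 (e x) := by
      intro x
      simp [hG2, he, Fin.sum_univ_succ, MeasurableEquiv.piFinSuccAbove,
        Fin.insertNthEquiv, Fin.removeNth, Fin.succAbove, Fin.tail, hSa, hSb]
    -- expansion of G2 as a finite sum of product functions
    set T : ℕ → ℕ → ℝ × (Fin m → ℝ) → ℝ := fun r s q =>
      ((a 0 ^ r * b 0 ^ s * (Nat.choose i r) * (Nat.choose j s)) * q.1 ^ (r + s))
        * (Sa q.2 ^ (i - r) * Sb q.2 ^ (j - s)) with hT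
    have hexp : ∀ q, G2 q = ∑ r ∈ Finset.range (i + 1), ∑ s ∈ Finset.range (j + 1), T r s q := by
      intro q
      simp only [hG2, add_pow, Finset.sum_mul_sum, hT]
      refine Finset.sum_congr rfl fun r _ => Finset.sum_congr rfl fun s _ => ?_
      rw [pow_add]
      ring
    have hTint : ∀ r s, r ≤ i → s ≤ j →
        Integrable (T r s) ((gaussianReal 0 1).prod (stdGaussianPi m)) := by
      intro r s hr hs
      have h1 : Integrable (fun t : ℝ =>
          (a 0 ^ r * b 0 ^ s * (Nat.choose i r) * (Nat.choose j s)) * t ^ (r + s))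
          (gaussianReal 0 1) := (integrable_pow_gaussianReal (r + s)).const_mul _
      have h2 : Integrable (fun w => Sa w ^ (i - r) * Sb w ^ (j - s)) (stdGaussianPi m) :=
        (IH (fun k => a k.succ) (fun k => b k.succ) (i - r) (j - s)
          (le_trans (Nat.sub_le _ _) hi) (le_trans (Nat.sub_le _ _) hj)).1
      exact h1.mul_prod h2
    have hG2int : Integrable G2 ((gaussianReal 0 1).prod (stdGaussianPi m)) := by
      have : Integrable (fun q => ∑ r ∈ Finset.range (i + 1), ∑ s ∈ Finset.range (j + 1), T r s q)
          ((gaussianReal 0 1).prod (stdGaussianPi m)) := by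
        apply integrable_finset_sum
        intro r hr
        apply integrable_finset_sum
        intro s hs
        exact hTint r s (Nat.lt_succ_iff.mp (Finset.mem_range.mp hr))
          (Nat.lt_succ_iff.mp (Finset.mem_range.mp hs))
      exact this.congr (Filter.Eventually.of_forall fun q => (hexp q).symm)
    constructor
    · have := (hMP.integrable_comp_emb e.measurableEmbedding (g := G2)).mpr hG2int
      exact this.congr (Filter.Eventually.of_forall fun x => (hcomp x).symm)
    · have hval : ∫ z, (∑ k, a k * z k) ^ i * (∑ k, b k * z k) ^ j ∂(stdGaussianPi (m + 1))
          = ∫ q, G2 q ∂((gaussianReal 0 1).prod (stdGaussianPi m)) := by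
        rw [← hMP.integral_comp e.measurableEmbedding G2]
        exact integral_congr_ae (Filter.Eventually.of_forall fun x => hcomp x)
      rw [hval]
      have hsum : ∫ q, G2 q ∂((gaussianReal 0 1).prod (stdGaussianPi m))
          = ∑ r ∈ Finset.range (i + 1), ∑ s ∈ Finset.range (j + 1),
              ∫ q, T r s q ∂((gaussianReal 0 1).prod (stdGaussianPi m)) := by
        rw [integral_congr_ae (Filter.Eventually.of_forall hexp)]
        rw [integral_finset_sum]
        · refine Finset.sum_congr rfl fun r hr => ?_
          rw [integral_finset_sum]
          intro s hs
          exact hTint r s (Nat.lt_succ_iff.mp (Finset.mem_range.mp hr))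
            (Nat.lt_succ_iff.mp (Finset.mem_range.mp hs))
        · intro r hr
          apply integrable_finset_sum
          intro s hs
          exact hTint r s (Nat.lt_succ_iff.mp (Finset.mem_range.mp hr))
            (Nat.lt_succ_iff.mp (Finset.mem_range.mp hs))
      rw [hsum]
      have hTval : ∀ r ∈ Finset.range (i + 1), ∀ s ∈ Finset.range (j + 1),
          ∫ q, T r s q ∂((gaussianReal 0 1).prod (stdGaussianPi m))
            = (a 0 ^ r * b 0 ^ s * (Nat.choose i r) * (Nat.choose j s)) * G (r + s)
              * mom (i - r) (j - s) (∑ k : Fin m, a k.succ * a k.succ) (∑ k : Fin m, b k.succ * b k.succ)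
                (∑ k : Fin m, a k.succ * b k.succ) := by
        intro r hr s hs
        have hr' := Nat.lt_succ_iff.mp (Finset.mem_range.mp hr)
        have hs' := Nat.lt_succ_iff.mp (Finset.mem_range.mp hs)
        rw [hT]
        rw [integral_prod_mul (μ := gaussianReal 0 1) (ν := stdGaussianPi m)
          (f := fun t : ℝ => (a 0 ^ r * b 0 ^ s * (Nat.choose i r) * (Nat.choose j s)) * t ^ (r + s))
          (g := fun w => Sa w ^ (i - r) * Sb w ^ (j - s))]
        rw [integral_const_mul, ← G_def (r + s)]
        rw [(IH (fun k => a k.succ) (fun k => b k.succ) (i - r) (j - s)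
          (le_trans (Nat.sub_le _ _) hi) (le_trans (Nat.sub_le _ _) hj)).2]
      rw [Finset.sum_congr rfl fun r hr => Finset.sum_congr rfl fun s hs => hTval r hr s hs]
      have := momrec i j hi hj (a 0) (b 0) (∑ k : Fin m, a k.succ * a k.succ)
        (∑ k : Fin m, b k.succ * b k.succ) (∑ k : Fin m, a k.succ * b k.succ)
      rw [this]
      simp only [Fin.sum_univ_succ]
      congr 1 <;> ring


lemma sum_sum_mul {α : Type*} [Fintype α] (c : ℝ) (u v : α → ℝ) :
    ∑ j, ∑ k, c * (u j * v k) = c * ((∑ j, u j) * (∑ k, v k)) := by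
  rw [Finset.sum_mul_sum, Finset.mul_sum]
  refine Finset.sum_congr rfl fun j _ => ?_
  rw [Finset.mul_sum]



end DSSM

open DSSM

/-- Second moment of the skew correction `S(θ) = (n/3) ∑_j (θ_j − p_j)³/p_j²` under the
Gaussian Laplace approximation `θ = p + A Z`, `A Aᵀ = n⁻¹(diag(p) − ppᵀ)`, `Z ∼ N(0,I)`:
`E[S(θ)²] = (5/3) χ²(Unif_{d+1}‖p) (d+1)²/n + (2/3)(d² − d)/n`. -/
theorem dirichlet_skew_second_moment
    (d : ℕ) (n : ℝ) (hn : 0 < n)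
    (p : Fin (d + 1) → ℝ) (hp : ∀ j, 0 < p j) (hsum : ∑ j, p j = 1)
    (A : Matrix (Fin (d + 1)) (Fin (d + 1)) ℝ)
    (hA : A * Aᵀ = n⁻¹ • (Matrix.diagonal p - Matrix.vecMulVec p p)) :
    ∫ z, (n / 3 * ∑ j, (A.mulVec z j) ^ 3 / (p j) ^ 2) ^ 2 ∂(stdGaussianPi (d + 1))
      = 5 / 3 * ((1 / ((d : ℝ) + 1) ^ 2) * (∑ j, (p j)⁻¹) - 1) * ((d : ℝ) + 1) ^ 2 / n
        + 2 / 3 * ((d : ℝ) ^ 2 - d) / n := by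
  classical
  have hn' : n ≠ 0 := hn.ne'
  set sf : Fin (d + 1) → Fin (d + 1) → ℝ :=
    fun j k => n⁻¹ * ((if j = k then p j else 0) - p j * p k) with hsf
  have hs : ∀ j k, (∑ i, A j i * A k i) = sf j k := by
    intro j k
    have h1 : (A * Aᵀ) j k = ∑ i, A j i * A k i := by
      simp [Matrix.mul_apply, Matrix.transpose_apply]
    rw [← h1, hA, hsf]
    simp [Matrix.smul_apply, Matrix.sub_apply, Matrix.diagonal_apply, Matrix.vecMulVec_apply,
      smul_eq_mul]
  -- pointwise expansion of the square
  have hpt : ∀ z : Fin (d + 1) → ℝ,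
      (n / 3 * ∑ j, (A.mulVec z j) ^ 3 / (p j) ^ 2) ^ 2
      = ∑ j, ∑ k, ((n / 3) ^ 2 * ((p j) ^ 2)⁻¹ * ((p k) ^ 2)⁻¹)
          * ((∑ i, A j i * z i) ^ 3 * (∑ i, A k i * z i) ^ 3) := by
    intro z
    have hmv : ∀ j, A.mulVec z j = ∑ i, A j i * z i := by
      intro j; simp [Matrix.mulVec, dotProduct]
    simp only [hmv]
    have h2 : (n / 3 * ∑ j, (∑ i, A j i * z i) ^ 3 / (p j) ^ 2) ^ 2
        = (n / 3) ^ 2 * ((∑ j, (∑ i, A j i * z i) ^ 3 / (p j) ^ 2)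
            * (∑ k, (∑ i, A k i * z i) ^ 3 / (p k) ^ 2)) := by ring
    rw [h2, Finset.sum_mul_sum, Finset.mul_sum]
    refine Finset.sum_congr rfl fun j _ => ?_
    rw [Finset.mul_sum]
    refine Finset.sum_congr rfl fun k _ => ?_
    ring
  rw [integral_congr_ae (Filter.Eventually.of_forall hpt)]
  have hintterm : ∀ (j k : Fin (d + 1)), Integrable
      (fun z => ((n / 3) ^ 2 * ((p j) ^ 2)⁻¹ * ((p k) ^ 2)⁻¹)
          * ((∑ i, A j i * z i) ^ 3 * (∑ i, A k i * z i) ^ 3)) (stdGaussianPi (d + 1)) :=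
    fun j k => ((key (d + 1) (fun i => A j i) (fun i => A k i) 3 3 le_rfl le_rfl).1).const_mul _
  rw [integral_finset_sum _ (fun j _ => integrable_finset_sum _ (fun k _ => hintterm j k))]
  have hrw : ∀ j, ∫ z, (∑ k, ((n / 3) ^ 2 * ((p j) ^ 2)⁻¹ * ((p k) ^ 2)⁻¹)
          * ((∑ i, A j i * z i) ^ 3 * (∑ i, A k i * z i) ^ 3)) ∂(stdGaussianPi (d + 1))
      = ∑ k, ((n / 3) ^ 2 * ((p j) ^ 2)⁻¹ * ((p k) ^ 2)⁻¹)
          * (9 * sf j j * sf k k * sf j k + 6 * sf j k ^ 3) := by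
    intro j
    rw [integral_finset_sum _ (fun k _ => hintterm j k)]
    refine Finset.sum_congr rfl fun k _ => ?_
    rw [integral_const_mul,
      (key (d + 1) (fun i => A j i) (fun i => A k i) 3 3 le_rfl le_rfl).2]
    rw [hs, hs, hs]
    rfl
  rw [Finset.sum_congr rfl fun j _ => hrw j]
  -- per-entry algebraic simplification
  have hterm : ∀ j k, ((n / 3) ^ 2 * ((p j) ^ 2)⁻¹ * ((p k) ^ 2)⁻¹)
        * (9 * sf j j * sf k k * sf j k + 6 * sf j k ^ 3)
      = (if j = k then (15 * (p j)⁻¹ - 36 + 27 * p j) / (9 * n) else 0)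
        + ((-(6 / (9 * n))) * (p j * p k) + (-(9 / (9 * n))) * ((1 - p j) * (1 - p k))) := by
    intro j k
    have hpj := (hp j).ne'
    have hpk := (hp k).ne'
    by_cases h : j = k
    · subst h
      simp only [hsf, if_pos rfl, if_true]
      field_simp
      ring
    · simp only [hsf, if_neg h, if_neg (fun hh => h hh), if_true]
      field_simp
      ring
  rw [Finset.sum_congr rfl fun j _ =>
    Finset.sum_congr rfl fun k _ => hterm j k]
  simp only [Finset.sum_add_distrib]
  have hdiag : ∑ j : Fin (d + 1), ∑ k : Fin (d + 1),
      (if j = k then (15 * (p j)⁻¹ - 36 + 27 * p j) / (9 * n) else 0)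
      = ∑ j : Fin (d + 1), (15 * (p j)⁻¹ - 36 + 27 * p j) / (9 * n) := by
    refine Finset.sum_congr rfl fun j _ => ?_
    simp [Finset.sum_ite_eq, Finset.mem_univ]
  have h1 : ∑ j : Fin (d+1), ∑ k : Fin (d+1), (-(6 / (9 * n))) * (p j * p k)
      = (-(6 / (9 * n))) * ((∑ j, p j) * (∑ j, p j)) := sum_sum_mul _ _ _
  have h2 : ∑ j : Fin (d+1), ∑ k : Fin (d+1), (-(9 / (9 * n))) * ((1 - p j) * (1 - p k))
      = (-(9 / (9 * n))) * ((∑ j, (1 - p j)) * (∑ j, (1 - p j))) := sum_sum_mul _ _ _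
  rw [hdiag, h1, h2, hsum]
  have h1p : ∑ j : Fin (d + 1), (1 - p j) = (d : ℝ) := by
    rw [Finset.sum_sub_distrib, hsum, Finset.sum_const, Finset.card_univ, Fintype.card_fin]
    push_cast; ring
  rw [h1p]
  have hS : ∑ j : Fin (d + 1), (15 * (p j)⁻¹ - 36 + 27 * p j) / (9 * n)
      = (15 * (∑ j, (p j)⁻¹) - 36 * ((d : ℝ) + 1) + 27) / (9 * n) := by
    rw [← Finset.sum_div]
    congr 1
    rw [Finset.sum_add_distrib, Finset.sum_sub_distrib, ← Finset.mul_sum, ← Finset.mul_sum,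
      hsum, Finset.sum_const, Finset.card_univ, Fintype.card_fin]
    push_cast; ring
  rw [hS]
  field_simp
  ring
end

section
/- Let p be a pmf on {0,...,d} with p_min ≥ 6/√(n+d) and p_min ≤ 1/(d+1). Then for every nonempty strict subset I of {0,...,d}, setting p_I = Σ_{i∈I} p_i, we have ||I| − d·p_I| / (√(n+d) √(p_I(1−p_I))) ≤ 1/2. -/
open scoped BigOperators

/-- If `p_min ≥ 6/√(n+d)` and `p_min ≤ 1/(d+1)`, then for every nonempty strict subset
`I` of `{0,…,d}`, with `p_I = ∑_{i∈I} p_i`,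
`||I| − d p_I| / (√(n+d) √(p_I(1−p_I))) ≤ 1/2`. -/
theorem subset_mass_deviation_bound
    (d n : ℕ) (p : Fin (d + 1) → ℝ) (hp : ∀ j, 0 < p j) (hsum : ∑ j, p j = 1)
    (pmin : ℝ) (hpmin : IsLeast (Set.range p) pmin)
    (h1 : 6 / Real.sqrt ((n : ℝ) + d) ≤ pmin)
    (h2 : pmin ≤ 1 / ((d : ℝ) + 1))
    (I : Finset (Fin (d + 1))) (hIne : I.Nonempty) (hIstrict : I ≠ Finset.univ) :
    |(I.card : ℝ) - d * ∑ i ∈ I, p i| /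
        (Real.sqrt ((n : ℝ) + d) * Real.sqrt ((∑ i ∈ I, p i) * (1 - ∑ i ∈ I, p i)))
      ≤ 1 / 2 := by
  set pI := ∑ i ∈ I, p i with hpIdef
  obtain ⟨j, hj⟩ := hpmin.1
  have hpmin_pos : 0 < pmin := hj ▸ hp j
  have hple : ∀ i, pmin ≤ p i := fun i => hpmin.2 ⟨i, rfl⟩
  have hk1 : 1 ≤ I.card := hIne.card_pos
  have hkd : I.card ≤ d := by
    have h := Finset.card_lt_card (Finset.ssubset_univ_iff.mpr hIstrict)
    rw [Finset.card_univ, Fintype.card_fin] at h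
    omega
  have hd1 : 1 ≤ d := le_trans hk1 hkd
  have hnd1 : (1:ℝ) ≤ (n:ℝ) + d := by
    have h : (1:ℝ) ≤ (d:ℝ) := by exact_mod_cast hd1
    have := Nat.cast_nonneg (α := ℝ) n
    linarith
  set s := Real.sqrt ((n:ℝ) + d) with hsdef
  have hspos : 0 < s := Real.sqrt_pos.mpr (by linarith)
  have hs6 : 6 ≤ pmin * s := by
    have := (div_le_iff₀ hspos).mp h1
    linarith
  have hIlow : (I.card : ℝ) * pmin ≤ pI := by
    have h := Finset.card_nsmul_le_sum I p pmin (fun i _ => hple i)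
    simpa [nsmul_eq_mul] using h
  have hcompl : (1 : ℝ) - pI = ∑ i ∈ Iᶜ, p i := by
    have h := Finset.sum_add_sum_compl I p
    rw [hsum] at h
    linarith
  have hclow' : ((d : ℝ) + 1 - I.card) * pmin ≤ 1 - pI := by
    have h := Finset.card_nsmul_le_sum Iᶜ p pmin (fun i _ => hple i)
    have hcard : Iᶜ.card = d + 1 - I.card := by
      simp [Finset.card_compl, Fintype.card_fin]
    have hcast : ((Iᶜ.card : ℕ) : ℝ) = (d : ℝ) + 1 - I.card := by
      rw [hcard, Nat.cast_sub (by omega : I.card ≤ d + 1)]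
      push_cast
      ring
    rw [hcompl]
    calc ((d : ℝ) + 1 - I.card) * pmin = (Iᶜ.card : ℝ) * pmin := by rw [hcast]
      _ ≤ ∑ i ∈ Iᶜ, p i := by simpa [nsmul_eq_mul] using h
  have hpIpos : 0 < pI := Finset.sum_pos (fun i _ => hp i) hIne
  have hkdR : (I.card : ℝ) ≤ d := by exact_mod_cast hkd
  have hk1R : (1:ℝ) ≤ (I.card : ℝ) := by exact_mod_cast hk1
  have hqpos : 0 < 1 - pI := by nlinarith
  have hd2 : pmin * ((d:ℝ) + 1) ≤ 1 := by
    rw [le_div_iff₀ (by positivity)] at h2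
    linarith
  set m := min pI (1 - pI) with hmdef
  have hmpos : 0 < m := lt_min hpIpos hqpos
  have hnum : |(I.card : ℝ) - d * pI| * pmin ≤ m := by
    rw [← abs_of_pos hpmin_pos, ← abs_mul]
    have hdpos : (0:ℝ) ≤ (d:ℝ) := Nat.cast_nonneg d
    rcases min_cases pI (1 - pI) with ⟨hm, hc⟩ | ⟨hm, hc⟩
    · rw [hmdef, hm, abs_le]
      constructor
      · nlinarith [mul_nonneg (mul_nonneg hdpos hpIpos.le) hpmin_pos.le]
      · nlinarith [mul_nonneg (mul_nonneg hdpos hpIpos.le) hpmin_pos.le]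
    · rw [hmdef, hm, abs_le]
      constructor
      · nlinarith [mul_nonneg (mul_nonneg hdpos hqpos.le) hpmin_pos.le]
      · nlinarith [mul_nonneg (sub_nonneg.mpr hkdR) hpmin_pos.le,
          mul_nonneg hqpos.le (sub_nonneg.mpr hd2)]
  have hT : m * m ≤ pI * (1 - pI) :=
    mul_le_mul (min_le_left _ _) (min_le_right _ _) hmpos.le hpIpos.le
  have hsqrt : m ≤ Real.sqrt (pI * (1 - pI)) := by
    have h := Real.sqrt_le_sqrt hT
    rwa [Real.sqrt_mul_self hmpos.le] at h
  have hTpos : 0 < Real.sqrt (pI * (1 - pI)) := lt_of_lt_of_le hmpos hsqrt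
  rw [div_le_iff₀ (by positivity)]
  have h3 : s * (|(I.card : ℝ) - d * pI| * pmin) ≤ s * Real.sqrt (pI * (1 - pI)) :=
    mul_le_mul_of_nonneg_left (hnum.trans hsqrt) hspos.le
  have h4 : 6 * |(I.card : ℝ) - d * pI| ≤ (pmin * s) * |(I.card : ℝ) - d * pI| :=
    mul_le_mul_of_nonneg_right hs6 (abs_nonneg _)
  linarith [abs_nonneg ((I.card : ℝ) - d * pI)]
end
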